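/- arXiv:0902.2323 — 11 statements merged into one kernel-verified Lean document; each statement's English description precedes it below -/
import Mathlib

section
/- Let X be a nonempty set and let g : X* → X be a function on finite strings over X (with g of the empty string defined to be the empty string). Then g is associative (i.e., for all strings x,y,z,x',y',z' with xyz = x'y'z' as strings one has g(x g(y) z) = g(x' g(y') z')) if and only if for every decomposition of a string into three parts x, y, z one has g(x g(y) z) = g(x y z). -/
variable {X : Type*}

/-- The string consisting of the single letter `g y` if `y` is nonempty, and the
empty string if `y` is empty (the convention `g ε = ε`). -/
def strOf (g : List X → X) (y : List X) : List X :=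
  match y with
  | [] => []
  | _ => [g y]

/-- Associativity for functions on strings. -/
def AssocStar (g : List X → X) : Prop :=
  ∀ x y z x' y' z' : List X, x ++ y ++ z = x' ++ y' ++ z' →
    g (x ++ strOf g y ++ z) = g (x' ++ strOf g y' ++ z')

/-- Range-idempotency for functions on strings. -/
def RangeIdem (g : List X → X) : Prop :=
  ∀ x : List X, x ≠ [] → ∀ n : ℕ, 1 ≤ n → g (List.replicate n (g x)) = g x

/-- Application of an `n`-ary function to a list of length `n`. -/
def liftF {n : ℕ} (f : (Fin n → X) → X) (l : List X) (h : l.length = n) : X :=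
  f fun i => l.get (Fin.cast h.symm i)

/-- Associativity for `n`-ary functions. -/
def AssocFin {n : ℕ} (f : (Fin n → X) → X) : Prop :=
  ∀ (x z x' z' y y' : List X) (hy : y.length = n) (hy' : y'.length = n),
    x.length + z.length = n - 1 → x'.length + z'.length = n - 1 →
    x ++ y ++ z = x' ++ y' ++ z' →
    ∀ (h : (x ++ [liftF f y hy] ++ z).length = n)
      (h' : (x' ++ [liftF f y' hy'] ++ z').length = n),
      liftF f (x ++ [liftF f y hy] ++ z) h = liftF f (x' ++ [liftF f y' hy'] ++ z') h'

variable {L : Type*} [DistribLattice L] [BoundedOrder L]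

/-- Lattice polynomial functions: representable in disjunctive normal form. -/
def IsPolynomialFn {n : ℕ} (f : (Fin n → L) → L) : Prop :=
  ∃ α : Finset (Fin n) → L,
    ∀ x : Fin n → L, f x = Finset.univ.sup fun I : Finset (Fin n) => α I ⊓ I.inf x

/-- The ternary median. -/
def med (a b c : L) : L := (a ⊔ b) ⊓ (a ⊔ c) ⊓ (b ⊔ c)

/-- The characteristic vector of `I ⊆ [n]`. -/
def charVec {n : ℕ} (I : Finset (Fin n)) : Fin n → L := fun i => if i ∈ I then ⊤ else ⊥

/-- A function on strings all of whose `n`-ary components (`n ≥ 1`) are polynomial. -/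
def IsPolyStar (g : List L → L) : Prop :=
  ∀ n : ℕ, 1 ≤ n → IsPolynomialFn fun x : Fin n → L => g (List.ofFn x)

/-- a function `g : X* → X` (with `g ε = ε`) is associative if and only if
`g(x g(y) z) = g(x y z)` for every decomposition of a string into three parts. -/
theorem stmt0 [Nonempty X] (g : List X → X) :
    AssocStar g ↔ ∀ x y z : List X, g (x ++ strOf g y ++ z) = g (x ++ y ++ z) := by
  constructor
  · intro h x y z
    have := h x y z [] [] (x ++ y ++ z) (by simp)
    simpa [strOf] using this
  · intro h x y z x' y' z' hxyz
    rw [h x y z, h x' y' z', hxyz]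
end

section
/- Let X be a nonempty set and let g : X* → X be a function on finite strings over X. Then g satisfies g(x g(y) z) = g(x y z) for every decomposition of a string into parts x, y, z if and only if g satisfies g(g(x) g(y)) = g(x y) for all strings x, y ∈ X*. In particular, associativity of g is equivalent to each of these two conditions. -/
variable {X : Type*}

variable {L : Type*} [DistribLattice L] [BoundedOrder L]

lemma strOf_nil (g : List X → X) : strOf g ([] : List X) = [] := rfl

lemma strOf_ne (g : List X → X) {y : List X} (h : y ≠ []) : strOf g y = [g y] := by
  cases y with
  | nil => contradiction
  | cons a t => rfl

section
variable (g : List X → X)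
  (h2 : ∀ x y : List X, g (strOf g x ++ strOf g y) = g (x ++ y))

include h2

lemma aux1 : ∀ y : List X, g (strOf g y) = g y := by
  intro y
  have := h2 y []
  simpa [strOf_nil] using this

lemma strOf_idem {y : List X} (hy : y ≠ []) : strOf g (strOf g y) = strOf g y := by
  rw [strOf_ne g hy, strOf_ne g (by simp : ([g y] : List X) ≠ [])]
  have : g [g y] = g y := by
    have := aux1 g h2 y
    rwa [strOf_ne g hy] at this
  rw [this]

lemma auxA : ∀ x y : List X, g (x ++ strOf g y) = g (x ++ y) := by
  intro x y
  by_cases hy : y = []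
  · subst hy; rw [strOf_nil]
  by_cases hx : x = []
  · subst hx; simpa using aux1 g h2 y
  · have h' := h2 x (strOf g y)
    rw [strOf_idem g h2 hy] at h'
    rw [← h', h2 x y]

lemma auxB : ∀ y z : List X, g (strOf g y ++ z) = g (y ++ z) := by
  intro y z
  by_cases hy : y = []
  · subst hy; rw [strOf_nil]
  by_cases hz : z = []
  · subst hz; simpa using aux1 g h2 y
  · have h' := h2 (strOf g y) z
    rw [strOf_idem g h2 hy] at h'
    rw [← h', h2 y z]

lemma auxP1 : ∀ x y z : List X, g (x ++ strOf g y ++ z) = g (x ++ y ++ z) := by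
  intro x y z
  by_cases hy : y = []
  · subst hy; rw [strOf_nil]
  by_cases hx : x = []
  · subst hx; simpa using auxB g h2 y z
  by_cases hz : z = []
  · subst hz; simpa using auxA g h2 x y
  · rw [strOf_ne g hy]
    have hne1 : x ++ [g y] ≠ [] := by simp
    have hne2 : x ++ y ≠ [] := by simp [hx]
    have e1 := h2 (x ++ [g y]) z
    have e2 := h2 (x ++ y) z
    rw [strOf_ne g hne1] at e1
    rw [strOf_ne g hne2] at e2
    have e3 : g (x ++ [g y]) = g (x ++ y) := by
      have := auxA g h2 x y
      rwa [strOf_ne g hy] at this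
    rw [e3] at e1
    rw [← e1, e2]

end

/-- the condition `g(x g(y) z) = g(x y z)` is equivalent to the condition
`g(g(x) g(y)) = g(x y)`, and associativity of `g` is equivalent to each of them. -/
theorem stmt1 [Nonempty X] (g : List X → X) :
    ((∀ x y z : List X, g (x ++ strOf g y ++ z) = g (x ++ y ++ z)) ↔
        ∀ x y : List X, g (strOf g x ++ strOf g y) = g (x ++ y)) ∧
    (AssocStar g ↔ ∀ x y z : List X, g (x ++ strOf g y ++ z) = g (x ++ y ++ z)) ∧
    (AssocStar g ↔ ∀ x y : List X, g (strOf g x ++ strOf g y) = g (x ++ y)) := by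
  have main : (∀ x y z : List X, g (x ++ strOf g y ++ z) = g (x ++ y ++ z)) ↔
      ∀ x y : List X, g (strOf g x ++ strOf g y) = g (x ++ y) := by
    constructor
    · intro h1 x y
      have a := h1 [] x (strOf g y)
      have b := h1 x y []
      simp only [List.nil_append, List.append_nil] at a b
      rw [a, b]
    · intro h2
      exact auxP1 g h2
  have hAs : AssocStar g ↔
      ∀ x y z : List X, g (x ++ strOf g y ++ z) = g (x ++ y ++ z) := by
    constructor
    · intro h x y z
      have := h x y z (x ++ y ++ z) [] [] (by simp)
      simpa [strOf_nil] using this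
    · intro h1 x y z x' y' z' heq
      rw [h1 x y z, h1 x' y' z', heq]
  exact ⟨main, hAs, hAs.trans main⟩
end

section
/- Let X be a nonempty set and let g : X* → X be an associative and range-idempotent function. Then for every string of the form x y z, where x and z are strings and y is a single letter, one has g(x g(x y z) z) = g(x y z). -/
variable {X : Type*}

variable {L : Type*} [DistribLattice L] [BoundedOrder L]

lemma strOf_eq_of_ne (g : List X → X) (u : List X) (h : u ≠ []) :
    strOf g u = [g u] := by
  cases u with
  | nil => exact absurd rfl h
  | cons a t => rfl

lemma keyK {g : List X → X} (hg : AssocStar g) (a u b : List X) :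
    g (a ++ strOf g u ++ b) = g (a ++ u ++ b) := by
  have h1 := hg a u b [] (a ++ u ++ b) [] (by simp)
  have h2 := hg [] (a ++ u ++ b) [] (a ++ u ++ b) [] [] (by simp)
  have h3 : strOf g ([] : List X) = [] := rfl
  rw [h3] at h2
  simp only [List.append_nil, List.nil_append] at h1 h2
  rw [h1, h2]

lemma keyK' {g : List X → X} (hg : AssocStar g) (a u b : List X) (hu : u ≠ []) :
    g (a ++ [g u] ++ b) = g (a ++ u ++ b) := by
  rw [← strOf_eq_of_ne g u hu]; exact keyK hg a u b

lemma dup {g : List X → X} (hg : AssocStar g) (hri : RangeIdem g)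
    (u : List X) (hu : u ≠ []) : g (u ++ u) = g u := by
  have h1 : g (([] : List X) ++ [g u] ++ u) = g ([] ++ u ++ u) := keyK' hg [] u u hu
  have h2 : g ([g u] ++ [g u] ++ ([] : List X)) = g ([g u] ++ u ++ []) :=
    keyK' hg [g u] u [] hu
  simp only [List.nil_append, List.append_nil] at h1 h2
  have h3 : ([g u] ++ [g u] : List X) = List.replicate 2 (g u) := rfl
  rw [← h1, ← h2, h3]
  exact hri u hu 2 (by norm_num)

lemma contract {g : List X → X} (hg : AssocStar g) (hri : RangeIdem g)
    (a u b : List X) : g (a ++ (u ++ u) ++ b) = g (a ++ u ++ b) := by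
  rcases eq_or_ne u [] with rfl | hu
  · simp
  have h1 : g (a ++ [g (u ++ u)] ++ b) = g (a ++ (u ++ u) ++ b) :=
    keyK' hg a (u ++ u) b (by simp [hu])
  have h2 : g (a ++ [g u] ++ b) = g (a ++ u ++ b) := keyK' hg a u b hu
  rw [← h1, dup hg hri u hu, h2]
/-- if `g : X* → X` is associative and range-idempotent then
`g(x g(x y z) z) = g(x y z)` for all strings `x, z` and every letter `y`. -/
theorem stmt4 [Nonempty X] (g : List X → X) (hg : AssocStar g) (hri : RangeIdem g)
    (x z : List X) (y : X) :
    g (x ++ [g (x ++ y :: z)] ++ z) = g (x ++ y :: z) := by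
  set w : List X := x ++ y :: z with hwdef
  have hw : w ≠ [] := by
    cases x <;> simp [hwdef]
  have h1 : g (x ++ [g w] ++ z) = g (x ++ w ++ z) := keyK' hg x w z hw
  have h2 : g (x ++ w ++ z) = g ((x ++ x) ++ (y :: (z ++ z))) := by
    rw [hwdef]; congr 1; simp
  have h3 : g (([] : List X) ++ (x ++ x) ++ (y :: (z ++ z)))
      = g ([] ++ x ++ (y :: (z ++ z))) := contract hg hri [] x (y :: (z ++ z))
  have h4 : g ((x ++ [y]) ++ (z ++ z) ++ ([] : List X))
      = g ((x ++ [y]) ++ z ++ []) := contract hg hri (x ++ [y]) z []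
  simp only [List.nil_append, List.append_nil] at h3 h4
  rw [h1, h2, h3]
  have h5 : x ++ y :: (z ++ z) = (x ++ [y]) ++ (z ++ z) := by simp
  have h6 : (x ++ [y]) ++ z = x ++ y :: z := by simp
  rw [h5, h4, h6]
end

section
/- There is no function g_2 : ℝ² → ℝ such that g_2(g_2(x,y), z) = x − y + z and g_2(x, g_2(y,z)) = x − y + z for all real x, y, z. Consequently, the ternary real function f(x,y,z) = x − y + z, although associative as an n-ary function, is not the ternary component of any associative function g : ℝ* → ℝ. -/
variable {X : Type*}

variable {L : Type*} [DistribLattice L] [BoundedOrder L]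

/-- Alternating sum of a 5-element list. -/
def alt5 (l : List ℝ) : ℝ :=
  match l with
  | [a,b,c,d,e] => a - b + c - d + e
  | _ => 0

lemma key_alt5 (x z y : List ℝ) (hy : y.length = 3) (hxz : x.length + z.length = 2)
    (h : (x ++ [liftF (fun v : Fin 3 → ℝ => v 0 - v 1 + v 2) y hy] ++ z).length = 3) :
    liftF (fun v : Fin 3 → ℝ => v 0 - v 1 + v 2)
      (x ++ [liftF (fun v : Fin 3 → ℝ => v 0 - v 1 + v 2) y hy] ++ z) h
      = alt5 (x ++ y ++ z) := by
  obtain ⟨p, q, r, rfl⟩ : ∃ p q r, y = [p,q,r] := by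
    match y, hy with | [p,q,r], _ => exact ⟨p,q,r,rfl⟩
  rcases x with _|⟨a, _|⟨b, _|⟨c, x⟩⟩⟩ <;> simp at hxz
  · obtain ⟨d, e, rfl⟩ : ∃ d e, z = [d,e] := by
      match z, hxz with | [d,e], _ => exact ⟨d,e,rfl⟩
    simp [liftF, alt5]
    try ring
  · obtain ⟨d, rfl⟩ : ∃ d, z = [d] := by
      match z, hxz with | [d], _ => exact ⟨d,rfl⟩
    simp [liftF, alt5]
    try ring
  · obtain rfl : z = [] := by match z, hxz with | [], _ => rfl
    simp [liftF, alt5]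
    try ring
  · omega

/-- there is no binary `g₂` with `g₂(g₂(x,y),z) = g₂(x,g₂(y,z)) = x - y + z`;
consequently `f(x,y,z) = x - y + z`, although associative as a ternary function, is not
the ternary component of any associative `g : ℝ* → ℝ`. -/

theorem stmt5 :
    (¬ ∃ g2 : ℝ → ℝ → ℝ, ∀ x y z : ℝ,
        g2 (g2 x y) z = x - y + z ∧ g2 x (g2 y z) = x - y + z) ∧
    AssocFin (fun v : Fin 3 → ℝ => v 0 - v 1 + v 2) ∧
    ¬ ∃ g : List ℝ → ℝ, AssocStar g ∧ ∀ x y z : ℝ, g [x, y, z] = x - y + z := by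
  have P1 : ¬ ∃ g2 : ℝ → ℝ → ℝ, ∀ x y z : ℝ,
      g2 (g2 x y) z = x - y + z ∧ g2 x (g2 y z) = x - y + z := by
    rintro ⟨g2, h⟩
    set a := g2 0 0 with ha
    have h2 : ∀ x, g2 x a = x := fun x => by
      have := (h x 0 0).2; simpa [← ha] using this
    have h3 : ∀ x z, g2 x z = x - a + z := fun x z => by
      have := (h x a z).1; rwa [h2] at this
    have := (h 0 (a+1) 0).1
    rw [h3, h3] at this
    linarith
  refine ⟨P1, ?_, ?_⟩
  · intro x z x' z' y y' hy hy' hxz hxz' heq h h'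
    rw [key_alt5 x z y hy hxz h, key_alt5 x' z' y' hy' hxz' h', heq]
  · rintro ⟨g, hg, h3⟩
    refine P1 ⟨fun x y => g [x, y], fun x y z => ⟨?_, ?_⟩⟩
    · have e1 := hg [] [x, y] [z] [] [x, y, z] [] rfl
      have e2 := hg [x, y, z] [] [] [] [x, y, z] [] (by simp)
      simp only [strOf, List.nil_append, List.append_nil] at e1 e2
      show g [g [x,y], z] = x - y + z
      rw [show ([g [x,y], z] : List ℝ) = [g [x,y]] ++ [z] from rfl, e1, ← e2, h3]
    · have e1 := hg [x] [y, z] [] [] [x, y, z] [] (by simp)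
      have e2 := hg [x, y, z] [] [] [] [x, y, z] [] (by simp)
      simp only [strOf, List.nil_append, List.append_nil] at e1 e2
      show g [x, g [y,z]] = x - y + z
      rw [show ([x, g [y,z]] : List ℝ) = [x] ++ [g [y,z]] from rfl, e1, ← e2, h3]
end

section
/- Let L be a bounded distributive lattice. A function f : L^n → L is a lattice polynomial function if and only if f(x y z) = med(f(x 0 z), y, f(x 1 z)) for every x ∈ L^{k−1}, y ∈ L, z ∈ L^{n−k}, 1 ≤ k ≤ n, where med is the ternary median med(a,b,c) = (a ∨ b) ∧ (a ∨ c) ∧ (b ∨ c). -/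
variable {X : Type*}

variable {L : Type*} [DistribLattice L] [BoundedOrder L]

/-!
Fixing all arguments but the `k`-th, the median condition says exactly that
`u ↦ f (update w k u)` has the form `u ↦ a ⊔ c ⊓ u` with `a = f (update w k ⊥)` and
`c = f (update w k ⊤)`, since `med a u c = a ⊔ c ⊓ u` once `a ≤ c`. Every conjunction
`⋀_{i ∈ I} x_i` has this shape in each variable, and the shape is preserved by meets with
constants and by finite joins, so polynomial functions satisfy the condition. Conversely,
expanding `f` one variable at a time along `f w = f (w[k ↦ ⊥]) ⊔ f (w[k ↦ ⊤]) ⊓ w k`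
produces the disjunctive normal form with coefficients `α I = f (charVec I)`.
-/

open Function Finset

lemma med_eq_sup_inf_of_le {α : Type*} [DistribLattice α] {a c : α} (h : a ≤ c) (y : α) :
    med a y c = a ⊔ c ⊓ y := by
  rw [med, sup_eq_right.mpr h, inf_eq_left.mpr (le_sup_of_le_right inf_le_right),
    inf_sup_right, inf_eq_left.mpr h, inf_comm]

section Update

variable {α ι : Type*} [DecidableEq ι]

lemma Finset.inf_update_of_mem [SemilatticeInf α] [OrderTop α] {I : Finset ι} {k : ι}
    (hk : k ∈ I) (w : ι → α) (u : α) : I.inf (update w k u) = u ⊓ (I.erase k).inf w := by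
  rw [← insert_erase hk, inf_insert, update_self, erase_insert (notMem_erase k I)]
  exact congrArg _ (inf_congr rfl fun i hi => update_of_ne (ne_of_mem_erase hi) _ _)

lemma Finset.inf_update_of_notMem [SemilatticeInf α] [OrderTop α] {I : Finset ι} {k : ι}
    (hk : k ∉ I) (w : ι → α) (u : α) : I.inf (update w k u) = I.inf w :=
  inf_congr rfl fun _ hi => update_of_ne (ne_of_mem_of_not_mem hi hk) _ _

lemma Finset.inf_update_eq_sup_inf [Lattice α] [BoundedOrder α] (I : Finset ι) (w : ι → α)
    (k : ι) (u : α) :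
    I.inf (update w k u) = I.inf (update w k ⊥) ⊔ I.inf (update w k ⊤) ⊓ u := by
  by_cases hk : k ∈ I
  · rw [inf_update_of_mem hk, inf_update_of_mem hk, inf_update_of_mem hk, bot_inf_eq,
      bot_sup_eq, top_inf_eq, inf_comm]
  · simp only [inf_update_of_notMem hk, sup_inf_self]

lemma forall_update_eq_med_iff (f : (ι → L) → L) :
    (∀ (w : ι → L) (k : ι) (y : L),
      f (update w k y) = med (f (update w k ⊥)) y (f (update w k ⊤))) ↔
    ∀ (w : ι → L) (k : ι) (y : L),
      f (update w k y) = f (update w k ⊥) ⊔ f (update w k ⊤) ⊓ y := by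
  refine forall₂_congr fun w k => ?_
  constructor
  · intro h y
    have hle : f (update w k ⊥) ≤ f (update w k ⊤) :=
      calc f (update w k ⊥) = med (f (update w k ⊥)) ⊥ (f (update w k ⊤)) := h ⊥
        _ ≤ ⊥ ⊔ f (update w k ⊤) := inf_le_right
        _ = f (update w k ⊤) := bot_sup_eq _
    rw [h y, med_eq_sup_inf_of_le hle]
  · intro h y
    have hle : f (update w k ⊥) ≤ f (update w k ⊤) := by
      rw [h ⊤, inf_top_eq]
      exact le_sup_left
    rw [h y, med_eq_sup_inf_of_le hle]

end Update

lemma IsPolynomialFn.update_eq_sup_inf {n : ℕ} {f : (Fin n → L) → L} (hf : IsPolynomialFn f)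
    (w : Fin n → L) (k : Fin n) (u : L) :
    f (update w k u) = f (update w k ⊥) ⊔ f (update w k ⊤) ⊓ u := by
  obtain ⟨α, hα⟩ := hf
  simp only [hα]
  rw [sup_inf_distrib_right, ← sup_sup]
  refine sup_congr rfl fun I _ => ?_
  rw [Pi.sup_apply, I.inf_update_eq_sup_inf w k u, inf_sup_left, inf_assoc]

lemma apply_eq_sup_powerset_piecewise_charVec {n : ℕ} {f : (Fin n → L) → L}
    (hf : ∀ (w : Fin n → L) (k : Fin n) (y : L),
      f (update w k y) = f (update w k ⊥) ⊔ f (update w k ⊤) ⊓ y)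
    (x : Fin n → L) (S : Finset (Fin n)) :
    f x = S.powerset.sup fun I => f (S.piecewise (charVec I) x) ⊓ I.inf x := by
  induction S using Finset.induction_on with
  | empty => simp
  | insert k S hk IH =>
    rw [IH, powerset_insert, sup_union, sup_image, ← sup_sup]
    refine sup_congr rfl fun I hI => ?_
    have hkI : k ∉ I := fun h => hk (mem_powerset.mp hI h)
    set v := S.piecewise (charVec I) x
    have hv : v = update v k (x k) := by
      rw [eq_comm, update_eq_iff]
      exact ⟨(piecewise_eq_of_notMem _ _ _ hk).symm, fun _ _ => rfl⟩
    have hbot : update v k ⊥ = (insert k S).piecewise (charVec I) x := by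
      rw [piecewise_insert, charVec, if_neg hkI]
    have htop : update v k ⊤ = (insert k S).piecewise (charVec (insert k I)) x := by
      rw [piecewise_insert, charVec, if_pos (mem_insert_self k I)]
      refine congrArg (update · k ⊤) (S.piecewise_congr (fun i hi => ?_) fun _ _ => rfl)
      simp only [charVec, mem_insert, ne_of_mem_of_not_mem hi hk, false_or]
    calc f v ⊓ I.inf x
        = (f (update v k ⊥) ⊔ f (update v k ⊤) ⊓ x k) ⊓ I.inf x := by rw [← hf, ← hv]
      _ = f (update v k ⊥) ⊓ I.inf x ⊔ f (update v k ⊤) ⊓ (insert k I).inf x := by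
        rw [inf_sup_right, inf_insert, inf_assoc]
      _ = _ := by rw [hbot, htop]; rfl

/-- `f : Lⁿ → L` is a lattice polynomial function if and only if
`f(x y z) = med(f(x 0 z), y, f(x 1 z))` for every position and every tuple. -/
theorem stmt6 {n : ℕ} (f : (Fin n → L) → L) :
    IsPolynomialFn f ↔ ∀ (w : Fin n → L) (k : Fin n) (y : L),
      f (Function.update w k y) =
        med (f (Function.update w k ⊥)) y (f (Function.update w k ⊤)) := by
  rw [forall_update_eq_med_iff]
  refine ⟨IsPolynomialFn.update_eq_sup_inf, fun hf => ⟨fun I => f (charVec I), fun x => ?_⟩⟩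
  simpa using apply_eq_sup_powerset_piecewise_charVec hf x univ
end

section
/- Let L be a bounded distributive lattice, f : L^n → L a lattice polynomial function, I ⊊ [n], J ⊆ [n], and k ∈ [n] \ I. Write e_I ∈ {0,1}^n for the characteristic vector of I and let x ∈ L^{k−1}, z ∈ L^{n−k} be such that the tuple x 0 z (with 0 in position k) equals e_I. Then f(x f(e_J) z) = med(α_f(I), α_f(J), α_f(I ∪ {k})), where α_f(I) = f(e_I) and med(a,b,c) = (a ∨ b) ∧ (a ∨ c) ∧ (b ∨ c). -/
variable {X : Type*}

variable {L : Type*} [DistribLattice L] [BoundedOrder L]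

/-- for a lattice polynomial function `f`, `I ⊊ [n]`, `J ⊆ [n]`, and
`k ∈ [n] \ I`, replacing the `k`-th entry (which is `0`) of `e_I` by `f(e_J)` gives
`f(x f(e_J) z) = med(α_f(I), α_f(J), α_f(I ∪ {k}))`. -/
theorem stmt7 {n : ℕ} (f : (Fin n → L) → L) (hf : IsPolynomialFn f)
    (I : Finset (Fin n)) (hI : I ≠ Finset.univ) (J : Finset (Fin n))
    (k : Fin n) (hk : k ∉ I) :
    f (Function.update (charVec I) k (f (charVec J))) =
      med (f (charVec I)) (f (charVec J)) (f (charVec (insert k I))) := by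
  obtain ⟨α, hα⟩ := hf
  set c := f (charVec J) with hc
  have hinf : ∀ S T : Finset (Fin n),
      S.inf (charVec T : Fin n → L) = if S ⊆ T then ⊤ else ⊥ := by
    intro S T
    split_ifs with h
    · exact (Finset.inf_eq_top_iff _ _).mpr fun i hi => by simp [charVec, h hi]
    · obtain ⟨i, hiS, hiT⟩ := Finset.not_subset.mp h
      refine le_antisymm ?_ bot_le
      calc S.inf (charVec T : Fin n → L) ≤ charVec T i := Finset.inf_le hiS
        _ = ⊥ := by simp [charVec, hiT]
  have hinfU : ∀ S : Finset (Fin n),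
      S.inf (Function.update (charVec I) k c) =
        if S ⊆ I then ⊤ else if S ⊆ insert k I then c else ⊥ := by
    intro S
    split_ifs with h1 h2
    · refine (Finset.inf_eq_top_iff _ _).mpr fun i hi => ?_
      have hik : i ≠ k := fun he => hk (he ▸ h1 hi)
      simp [Function.update_of_ne hik, charVec, h1 hi]
    · have hkS : k ∈ S := by
        by_contra hkS
        exact h1 fun i hi => (Finset.mem_insert.mp (h2 hi)).elim
          (fun he => absurd (he ▸ hi) hkS) id
      rw [← Finset.insert_erase hkS, Finset.inf_insert]
      have h2' : (S.erase k).inf (Function.update (charVec I) k c) = ⊤ := by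
        refine (Finset.inf_eq_top_iff _ _).mpr fun i hi => ?_
        have hik : i ≠ k := Finset.ne_of_mem_erase hi
        have : i ∈ I := (Finset.mem_insert.mp (h2 (Finset.mem_of_mem_erase hi))).elim
          (fun he => absurd he hik) id
        simp [Function.update_of_ne hik, charVec, this]
      simp [h2']
    · obtain ⟨i, hiS, hiI⟩ := Finset.not_subset.mp h2
      have hik : i ≠ k := fun he => hiI (he ▸ Finset.mem_insert_self k I)
      have hiI' : i ∉ I := fun hi => hiI (Finset.mem_insert_of_mem hi)
      refine le_antisymm ?_ bot_le
      calc S.inf (Function.update (charVec I) k c)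
          ≤ Function.update (charVec I) k c i := Finset.inf_le hiS
        _ = ⊥ := by simp [Function.update_of_ne hik, charVec, hiI']
  rw [hα, hα, hα]
  simp only [hinf, hinfU]
  set A := Finset.univ.sup (fun S : Finset (Fin n) => α S ⊓ if S ⊆ I then ⊤ else ⊥) with hA
  set W := Finset.univ.sup
      (fun S : Finset (Fin n) => α S ⊓ if S ⊆ insert k I then ⊤ else ⊥) with hW
  have hAW : A ≤ W := by
    refine Finset.sup_le fun S _ => le_trans ?_ (Finset.le_sup (Finset.mem_univ S))
    refine inf_le_inf_left _ ?_
    by_cases h1 : S ⊆ I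
    · rw [if_pos h1, if_pos (h1.trans (Finset.subset_insert k I))]
    · rw [if_neg h1]; exact bot_le
  have key : (Finset.univ.sup fun S : Finset (Fin n) =>
      α S ⊓ if S ⊆ I then ⊤ else if S ⊆ insert k I then c else ⊥) = A ⊔ (W ⊓ c) := by
    refine le_antisymm (Finset.sup_le fun S _ => ?_) (sup_le ?_ ?_)
    · split_ifs with h1 h2
      · have := Finset.le_sup (f := fun S : Finset (Fin n) => α S ⊓ if S ⊆ I then ⊤ else ⊥)
          (Finset.mem_univ S)
        simp only [if_pos h1] at this
        exact le_sup_of_le_left this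
      · have := Finset.le_sup
          (f := fun S : Finset (Fin n) => α S ⊓ if S ⊆ insert k I then ⊤ else ⊥)
          (Finset.mem_univ S)
        simp only [if_pos h2, inf_top_eq] at this
        exact le_sup_of_le_right (inf_le_inf_right c this)
      · simp
    · refine Finset.sup_le fun S _ => ?_
      have := Finset.le_sup (f := fun S : Finset (Fin n) =>
        α S ⊓ if S ⊆ I then ⊤ else if S ⊆ insert k I then c else ⊥) (Finset.mem_univ S)
      by_cases h1 : S ⊆ I
      · simp only [if_pos h1] at this ⊢
        exact this
      · simp only [if_neg h1]
        simp
    · rw [hW, Finset.sup_inf_distrib_right]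
      refine Finset.sup_le fun S _ => ?_
      have := Finset.le_sup (f := fun S : Finset (Fin n) =>
        α S ⊓ if S ⊆ I then ⊤ else if S ⊆ insert k I then c else ⊥) (Finset.mem_univ S)
      by_cases h2 : S ⊆ insert k I
      · by_cases h1 : S ⊆ I
        · simp only [if_pos h1, if_pos h2, inf_top_eq] at this ⊢
          exact le_trans inf_le_left this
        · simp only [if_neg h1, if_pos h2, inf_top_eq] at this ⊢
          exact this
      · simp only [if_neg h2]
        simp
  rw [key, med]
  have h1 : A ⊔ W = W := sup_eq_right.mpr hAW
  have h2 : W ⊓ (c ⊔ W) = W := inf_eq_left.mpr le_sup_right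
  rw [sup_inf_left, h1, inf_assoc, h2, inf_comm]
end

section
/- Let L be a bounded distributive lattice and let f : L^n → L be an associative lattice polynomial function with n ≥ 3. Then for every subset I ⊊ [n] with 1 < |I| < n, the value α_f(I) = f(e_I) satisfies α_f(I) = ⋁_{J ⊊ I} α_f(J); that is, the coefficient α*_f(I) in the minimal disjunctive normal form of f vanishes for all I of cardinality strictly between 1 and n. -/
variable {X : Type*}

variable {L : Type*} [DistribLattice L] [BoundedOrder L]

/-!
Choose `p ∉ I` and split `I` into `A = {i ∈ I | i < p}` and `B = {i ∈ I | p < i}`. Let `w` be the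
word of length `2n - 1` reading `e_A` on positions `0, …, n - 1` and `e_B` on positions
`n - 1, …, 2n - 2` (both vanish at the shared position `n - 1`). By associativity the value
`f(w₀ ⋯ f(w_k ⋯ w_{k+n-1}) ⋯ w_{2n-2})` does not depend on `k < n`; for `k = p` the outer
arguments dominate `e_I` because `p ∉ I`, so this value bounds `f(e_I)` from above.

If `A` and `B` are both nonempty, take `k = 0`: the value is `f(update e_B 0 (f e_A))`, which is at
most `f(e_B) ⊔ f(e_A)` since every term of the normal form either avoids coordinate `0` or lies
below `f(e_A)`. If `A = ∅` (resp. `B = ∅`), take `k = max I` (resp. `min I`): all other outer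
arguments are then `⊥`, so the value is at most `f(e_{k})`.
-/

open Finset Function

section Nest

variable {n : ℕ}

def wordSlice (w : ℕ → X) (s m : ℕ) : List X := List.ofFn fun i : Fin m => w (s + i)

/-- `f (nestAt f w k)` is `f(w₀ ⋯ w_{k-1} f(w_k ⋯ w_{k+n-1}) w_{k+n} ⋯ w_{2n-2})`. -/
def nestAt (f : (Fin n → X) → X) (w : ℕ → X) (k : ℕ) : Fin n → X := fun i =>
  if (i : ℕ) < k then w i else if (i : ℕ) = k then f (fun j => w (k + j)) else w (i + n - 1)

@[simp] lemma length_wordSlice (w : ℕ → X) (s m : ℕ) : (wordSlice w s m).length = m := by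
  simp [wordSlice]

lemma wordSlice_append (w : ℕ → X) {s a t : ℕ} (b : ℕ) (h : s + a = t) :
    wordSlice w s a ++ wordSlice w t b = wordSlice w s (a + b) := by
  simp only [wordSlice, List.ofFn_add (f := fun i : Fin (a + b) => w (s + i))]
  simp [Fin.natAdd, ← h, add_assoc]

lemma liftF_wordSlice (f : (Fin n → X) → X) (w : ℕ → X) (s : ℕ)
    (h : (wordSlice w s n).length = n) : liftF f (wordSlice w s n) h = f fun i => w (s + i) := by
  unfold liftF
  congr 1
  funext i
  simp only [wordSlice, List.get_eq_getElem, List.getElem_ofFn]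
  rfl

lemma liftF_nest (f : (Fin n → X) → X) (w : ℕ → X) (k : ℕ) (hy : (wordSlice w k n).length = n)
    (h : (wordSlice w 0 k ++ [liftF f (wordSlice w k n) hy] ++
      wordSlice w (k + n) (n - 1 - k)).length = n) :
    liftF f (wordSlice w 0 k ++ [liftF f (wordSlice w k n) hy] ++
      wordSlice w (k + n) (n - 1 - k)) h = f (nestAt f w k) := by
  unfold liftF
  congr 1
  funext i
  simp only [List.get_eq_getElem, Fin.val_cast, List.getElem_append, List.length_append,
    length_wordSlice, List.length_singleton, nestAt]
  split_ifs <;>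
    simp only [wordSlice, zero_add, List.getElem_ofFn, List.getElem_singleton] <;>
    first | omega | (congr 1; omega)

theorem AssocFin.apply_nestAt_eq {f : (Fin n → X) → X} (hf : AssocFin f) (w : ℕ → X)
    {k k' : ℕ} (hk : k < n) (hk' : k' < n) : f (nestAt f w k) = f (nestAt f w k') := by
  have split : ∀ k < n, wordSlice w 0 k ++ wordSlice w k n ++ wordSlice w (k + n) (n - 1 - k) =
      wordSlice w 0 (2 * n - 1) := fun k hk => by
    rw [wordSlice_append w n (zero_add k), wordSlice_append w _ (zero_add _)]
    congr 1; omega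
  have := hf (wordSlice w 0 k) (wordSlice w (k + n) (n - 1 - k)) (wordSlice w 0 k')
    (wordSlice w (k' + n) (n - 1 - k')) _ _ (length_wordSlice w k n) (length_wordSlice w k' n)
    (by grind [length_wordSlice]) (by grind [length_wordSlice]) (by rw [split k hk, split k' hk'])
    (by grind [length_wordSlice]) (by grind [length_wordSlice])
  rwa [liftF_nest, liftF_nest] at this

end Nest

section Polynomial

variable {n : ℕ} {f : (Fin n → L) → L}

theorem IsPolynomialFn.monotone (hf : IsPolynomialFn f) : Monotone f := by
  obtain ⟨α, hα⟩ := hf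
  intro x y hxy
  rw [hα x, hα y]
  exact sup_mono_fun fun S _ => inf_le_inf_left _ (inf_mono_fun fun i _ => hxy i)

theorem IsPolynomialFn.apply_update_le (hf : IsPolynomialFn f) (x : Fin n → L) (k : Fin n)
    (t : L) : f (update x k t) ≤ f (update x k ⊥) ⊔ t := by
  obtain ⟨α, hα⟩ := hf
  rw [hα, hα]
  refine Finset.sup_le fun S hS => ?_
  by_cases hk : k ∈ S
  · exact le_sup_of_le_right (inf_le_right.trans ((inf_le hk).trans (by simp)))
  · refine le_sup_of_le_left (le_of_eq_of_le ?_ (le_sup (f := fun S => α S ⊓ S.inf _) hS))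
    congr 1
    exact inf_congr rfl fun i hi => by simp [update_of_ne (ne_of_mem_of_not_mem hi hk)]

end Polynomial

section CharVec

variable {n : ℕ}

theorem charVec_mono {I J : Finset (Fin n)} (h : J ⊆ I) : (charVec J : Fin n → L) ≤ charVec I :=
  fun i => by
  by_cases hi : i ∈ J
  · simp [charVec, hi, h hi]
  · simp [charVec, hi]

theorem update_charVec_bot (J : Finset (Fin n)) (k : Fin n) :
    update (charVec J : Fin n → L) k ⊥ = charVec (J.erase k) := by
  funext i
  rcases eq_or_ne i k with rfl | hik <;> simp [charVec, update_of_ne, *]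

end CharVec

section Glue

variable {n : ℕ} {f : (Fin n → L) → L}

/-- The word `x₀ ⋯ x_{n-1} y₁ ⋯ y_{n-1}` of length `2n - 1`, padded with `⊥`. -/
def gluedWord (x y : Fin n → L) (j : ℕ) : L :=
  if h : j < n then x ⟨j, h⟩ else if h' : j + 1 - n < n then y ⟨j + 1 - n, h'⟩ else ⊥

theorem nestAt_gluedWord_of_lt (x y : Fin n → L) {k : ℕ} {i : Fin n} (h : (i : ℕ) < k) :
    nestAt f (gluedWord x y) k i = x i := by
  simp [nestAt, gluedWord, h]

theorem nestAt_gluedWord_of_gt (x y : Fin n → L) {k : ℕ} {i : Fin n} (h : k < i) :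
    nestAt f (gluedWord x y) k i = y i := by
  have hn : ¬(i : ℕ) + n - 1 < n := by omega
  have hi : (i : ℕ) + n - 1 + 1 - n = i := by omega
  simp [nestAt, gluedWord, h.not_gt, h.ne', hn, hi]

theorem nestAt_gluedWord_zero (x y : Fin n → L) (k : Fin n) (hk : (k : ℕ) = 0) :
    nestAt f (gluedWord x y) k = update y k (f x) := by
  funext i
  rcases eq_or_ne i k with rfl | hik
  · simp [nestAt, gluedWord, hk]
  · rw [nestAt_gluedWord_of_gt _ _ (by omega), update_of_ne hik]

end Glue

section Split

variable {n : ℕ} {f : (Fin n → L) → L} {I : Finset (Fin n)} {p : Fin n}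

theorem charVec_le_nestAt_split (hp : p ∉ I) :
    charVec I ≤ nestAt f (gluedWord (charVec {i ∈ I | i < p}) (charVec {i ∈ I | p < i})) p := by
  intro i
  rcases lt_trichotomy i p with h | rfl | h
  · rw [nestAt_gluedWord_of_lt _ _ h]
    by_cases hi : i ∈ I <;> simp [charVec, hi, h]
  · simp [charVec, hp]
  · rw [nestAt_gluedWord_of_gt _ _ h]
    by_cases hi : i ∈ I <;> simp [charVec, hi, h]

theorem nestAt_gluedWord_le_charVec_singleton {A B : Finset (Fin n)} {k : Fin n}
    (hA : ∀ a ∈ A, k ≤ a) (hB : ∀ b ∈ B, b ≤ k) :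
    nestAt f (gluedWord (charVec A) (charVec B)) k ≤ charVec {k} := by
  intro i
  rcases lt_trichotomy i k with h | rfl | h
  · rw [nestAt_gluedWord_of_lt _ _ h]
    have hi : i ∉ A := fun hi => (hA i hi).not_gt h
    simp [charVec, h.ne, hi]
  · simp [charVec]
  · rw [nestAt_gluedWord_of_gt _ _ h]
    have hi : i ∉ B := fun hi => (hB i hi).not_gt h
    simp [charVec, h.ne', hi]

end Split

namespace IsPolynomialFn

variable {n : ℕ} {f : (Fin n → L) → L} (hf : IsPolynomialFn f) (hassoc : AssocFin f)
  {I : Finset (Fin n)} {p : Fin n} (hp : p ∉ I)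
include hf hassoc hp

theorem apply_charVec_le_nestAt_split (k : Fin n) :
    f (charVec I) ≤
      f (nestAt f (gluedWord (charVec {i ∈ I | i < p}) (charVec {i ∈ I | p < i})) k) :=
  (hf.monotone (charVec_le_nestAt_split hp)).trans_eq (hassoc.apply_nestAt_eq _ p.isLt k.isLt)

theorem apply_charVec_le_singleton {k : Fin n} (hA : ∀ a ∈ I, a < p → k ≤ a)
    (hB : ∀ b ∈ I, p < b → b ≤ k) : f (charVec I) ≤ f (charVec {k}) :=
  (hf.apply_charVec_le_nestAt_split hassoc hp k).trans <| hf.monotone <|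
    nestAt_gluedWord_le_charVec_singleton (by simpa using hA) (by simpa using hB)

theorem apply_charVec_le_split :
    f (charVec I) ≤ f (charVec {i ∈ I | p < i}) ⊔ f (charVec {i ∈ I | i < p}) := by
  let k₀ : Fin n := ⟨0, p.pos⟩
  have hk₀ : k₀ ∉ {i ∈ I | p < i} := fun h => Nat.not_lt_zero p (mem_filter.1 h).2
  calc f (charVec I) ≤ f (update (charVec {i ∈ I | p < i}) k₀ (f (charVec {i ∈ I | i < p}))) :=
        (hf.apply_charVec_le_nestAt_split hassoc hp k₀).trans_eq
          (by rw [nestAt_gluedWord_zero _ _ k₀ rfl])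
    _ ≤ _ := by
        have := hf.apply_update_le (charVec {i ∈ I | p < i}) k₀ (f (charVec {i ∈ I | i < p}))
        rwa [update_charVec_bot, erase_eq_of_notMem hk₀] at this

end IsPolynomialFn

theorem stmt8_general {n : ℕ} (f : (Fin n → L) → L)
    (hf : IsPolynomialFn f) (hassoc : AssocFin f)
    (I : Finset (Fin n)) (hI1 : 1 < I.card) (hI2 : I.card < n) :
    f (charVec I) = I.ssubsets.sup fun J => f (charVec J) := by
  refine le_antisymm ?_
    (Finset.sup_le fun J hJ => hf.monotone (charVec_mono (mem_ssubsets.1 hJ).subset))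
  have le_sup_of_ssubset {J : Finset (Fin n)} (hJ : J ⊂ I) :
      f (charVec J) ≤ I.ssubsets.sup fun J => f (charVec J) :=
    le_sup (f := fun J => f (charVec J)) (mem_ssubsets.2 hJ)
  have singleton_ssubset {k : Fin n} (hk : k ∈ I) : {k} ⊂ I :=
    (singleton_subset_iff.2 hk).ssubset_of_ne (by rintro rfl; simp at hI1)
  obtain ⟨p, hp⟩ : ∃ p, p ∉ I := by
    simpa [eq_univ_iff_forall] using (card_lt_iff_ne_univ I).1 (by simpa using hI2)
  have hI : I.Nonempty := card_pos.1 (by omega)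
  by_cases hA : ∃ a ∈ I, a < p
  · by_cases hB : ∃ b ∈ I, p < b
    · refine (hf.apply_charVec_le_split hassoc hp).trans (sup_le ?_ ?_) <;>
        refine le_sup_of_ssubset (filter_ssubset.2 ?_)
      · exact hA.imp fun a ⟨ha, hap⟩ => ⟨ha, hap.not_gt⟩
      · exact hB.imp fun b ⟨hb, hpb⟩ => ⟨hb, hpb.not_gt⟩
    · refine (hf.apply_charVec_le_singleton hassoc hp (k := I.min' hI)
        (fun a ha _ => I.min'_le a ha) fun b hb hpb => (hB ⟨b, hb, hpb⟩).elim).trans ?_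
      exact le_sup_of_ssubset (singleton_ssubset (I.min'_mem hI))
  · refine (hf.apply_charVec_le_singleton hassoc hp (k := I.max' hI)
      (fun a ha hap => (hA ⟨a, ha, hap⟩).elim) fun b hb _ => I.le_max' b hb).trans ?_
    exact le_sup_of_ssubset (singleton_ssubset (I.max'_mem hI))

/-- if `f : Lⁿ → L` is an associative lattice polynomial function, `n ≥ 3`,
then for every `I ⊊ [n]` with `1 < |I| < n` one has `α_f(I) = ⋁_{J ⊊ I} α_f(J)`,
i.e. the minimal-DNF coefficient `α*_f(I)` vanishes. -/
theorem stmt8 {n : ℕ} (hn : 3 ≤ n) (f : (Fin n → L) → L)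
    (hf : IsPolynomialFn f) (hassoc : AssocFin f)
    (I : Finset (Fin n)) (hI1 : 1 < I.card) (hI2 : I.card < n) :
    f (charVec I) = I.ssubsets.sup fun J => f (charVec J) :=
  stmt8_general f hf hassoc I hI1 hI2
end

section
/- Let L be a bounded distributive lattice and let f : L^n → L be an associative lattice polynomial function with n ≥ 3. Then for every i ∈ [n] \ {1, n}, one has α_f({i}) = α_f({1}) ∧ α_f({n}), where α_f(I) = f(e_I) and e_I is the characteristic vector of I. -/
variable {X : Type*}

variable {L : Type*} [DistribLattice L] [BoundedOrder L]

/- ## Auxiliary lemmas -/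


lemma myRepcat {a b c : ℕ} (h : a + b = c) :
    List.replicate a (⊥:L) ++ List.replicate b ⊥ = List.replicate c ⊥ := by
  subst h; exact (List.replicate_add a b ⊥).symm

lemma myGetOne {a b m : ℕ} (v : L)
    (hm : m < (List.replicate a (⊥:L) ++ [v] ++ List.replicate b ⊥).length) :
    (List.replicate a (⊥:L) ++ [v] ++ List.replicate b ⊥)[m] = if m = a then v else ⊥ := by
  have hm' : m < a + (b + 1) := by simpa using hm
  rcases lt_trichotomy m a with h | h | h
  · rw [List.getElem_append_left (by simp; omega : m < (List.replicate a (⊥:L) ++ [v]).length)]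
    rw [List.getElem_append_left (by simpa using h)]
    rw [List.getElem_replicate, if_neg (by omega)]
  · subst h
    rw [List.getElem_append_left (by simp : m < (List.replicate m (⊥:L) ++ [v]).length)]
    rw [List.getElem_append_right (by simp)]
    simp
  · rw [List.getElem_append_right (by simp; omega)]
    rw [List.getElem_replicate, if_neg (by omega)]

lemma myGetTwo {a b d m : ℕ} (u w : L)
    (hm : m < (List.replicate a (⊥:L) ++ [u] ++ (List.replicate b ⊥ ++ [w] ++ List.replicate d ⊥)).length) :
    (List.replicate a (⊥:L) ++ [u] ++ (List.replicate b ⊥ ++ [w] ++ List.replicate d ⊥))[m]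
      = if m = a then u else if m = a + 1 + b then w else ⊥ := by
  have hm' : m < a + 1 + (b + 1 + d) := by simp at hm; omega
  by_cases h : m < a + 1
  · rw [List.getElem_append_left (by simp; omega : m < (List.replicate a (⊥:L) ++ [u]).length)]
    rcases lt_or_eq_of_le (Nat.lt_succ_iff.mp h) with h' | h'
    · rw [List.getElem_append_left (by simpa using h')]
      rw [List.getElem_replicate, if_neg (by omega), if_neg (by omega)]
    · subst h'
      rw [List.getElem_append_right (by simp)]
      simp
  · rw [List.getElem_append_right (by simp; omega)]
    rw [myGetOne w (by simp; omega)]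
    have hl : (List.replicate a (⊥:L) ++ [u]).length = a + 1 := by simp
    rw [hl]
    split_ifs <;> first | rfl | omega

lemma liftF_congr {n : ℕ} (f : (Fin n → L) → L) {l l' : List L} (e : l = l')
    (h : l.length = n) : liftF f l h = liftF f l' (e ▸ h) := by subst e; rfl

lemma liftF_one {n : ℕ} (a b : ℕ) (f : (Fin n → L) → L) (v : L)
    (h : (List.replicate a (⊥:L) ++ [v] ++ List.replicate b ⊥).length = n) :
    liftF f (List.replicate a (⊥:L) ++ [v] ++ List.replicate b ⊥) h
      = f (fun t => if (t : ℕ) = a then v else ⊥) := by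
  unfold liftF; congr 1; funext t
  rw [List.get_eq_getElem, myGetOne]; simp

lemma liftF_rep {n m : ℕ} (f : (Fin n → L) → L)
    (h : (List.replicate m (⊥:L)).length = n) :
    liftF f (List.replicate m (⊥:L)) h = f (fun _ => ⊥) := by
  unfold liftF; congr 1; funext t
  rw [List.get_eq_getElem, List.getElem_replicate]

lemma liftF_two {n : ℕ} (a b d : ℕ) (f : (Fin n → L) → L) (u w : L)
    (h : (List.replicate a (⊥:L) ++ [u] ++ (List.replicate b ⊥ ++ [w] ++ List.replicate d ⊥)).length = n) :
    liftF f (List.replicate a (⊥:L) ++ [u] ++ (List.replicate b ⊥ ++ [w] ++ List.replicate d ⊥)) h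
      = f (fun t => if (t : ℕ) = a then u else if (t : ℕ) = a + 1 + b then w else ⊥) := by
  unfold liftF; congr 1; funext t
  rw [List.get_eq_getElem, myGetTwo]; simp

lemma liftF_two' {n : ℕ} (a b d : ℕ) (f : (Fin n → L) → L) (u w : L)
    (h : ((List.replicate a (⊥:L) ++ [u] ++ List.replicate b ⊥) ++ [w] ++ List.replicate d ⊥).length = n) :
    liftF f ((List.replicate a (⊥:L) ++ [u] ++ List.replicate b ⊥) ++ [w] ++ List.replicate d ⊥) h
      = f (fun t => if (t : ℕ) = a then u else if (t : ℕ) = a + 1 + b then w else ⊥) := by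
  have e : (List.replicate a (⊥:L) ++ [u] ++ List.replicate b ⊥) ++ [w] ++ List.replicate d ⊥
      = List.replicate a (⊥:L) ++ [u] ++ (List.replicate b ⊥ ++ [w] ++ List.replicate d ⊥) := by
    simp only [List.append_assoc]
  rw [liftF_congr f e h, liftF_two]

lemma myFA {n : ℕ} (α : Finset (Fin n) → L) (j : Fin n) (v : L) :
    (Finset.univ.sup fun I : Finset (Fin n) => α I ⊓ I.inf (fun k => if k = j then v else ⊥))
      = α ∅ ⊔ (α {j} ⊓ v) := by
  apply le_antisymm
  · apply Finset.sup_le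
    intro I _
    by_cases h : ∀ k ∈ I, k = j
    · by_cases hj : j ∈ I
      · have hI : I = {j} := by
          ext k; simp only [Finset.mem_singleton]
          exact ⟨h k, fun e => e ▸ hj⟩
        subst hI
        simp
      · have hI : I = ∅ := by
          ext k; simp only [Finset.notMem_empty, iff_false]
          intro hk; exact hj ((h k hk) ▸ hk)
        subst hI
        exact le_sup_of_le_left inf_le_left
    · push_neg at h
      obtain ⟨k, hk, hkj⟩ := h
      have hb : I.inf (fun k => if k = j then v else ⊥) ≤ ⊥ := by
        refine le_trans (Finset.inf_le hk) ?_
        simp [hkj]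
      exact le_trans (le_trans inf_le_right hb) bot_le
  · apply sup_le
    · refine le_trans ?_ (Finset.le_sup (Finset.mem_univ (∅ : Finset (Fin n))))
      simp
    · refine le_trans ?_ (Finset.le_sup (Finset.mem_univ ({j} : Finset (Fin n))))
      simp

lemma myFB {n : ℕ} (α : Finset (Fin n) → L) (q r : Fin n) (hqr : q ≠ r) :
    (Finset.univ.sup fun I : Finset (Fin n) =>
        α I ⊓ I.inf (fun k => if k = q then ⊤ else if k = r then α ∅ else ⊥))
      = α ∅ ⊔ α {q} := by
  apply le_antisymm
  · apply Finset.sup_le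
    intro I _
    by_cases h : ∀ k ∈ I, k = q ∨ k = r
    · by_cases hr : r ∈ I
      · have hb : I.inf (fun k => if k = q then ⊤ else if k = r then α ∅ else ⊥) ≤ α ∅ := by
          refine le_trans (Finset.inf_le hr) ?_
          simp [hqr.symm]
        exact le_sup_of_le_left (le_trans inf_le_right hb)
      · have h' : ∀ k ∈ I, k = q := by
          intro k hk
          rcases h k hk with e | e
          · exact e
          · exact absurd (e ▸ hk) hr
        by_cases hq : q ∈ I
        · have hI : I = {q} := by
            ext k; simp only [Finset.mem_singleton]
            exact ⟨h' k, fun e => e ▸ hq⟩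
          subst hI
          exact le_sup_of_le_right inf_le_left
        · have hI : I = ∅ := by
            ext k; simp only [Finset.notMem_empty, iff_false]
            intro hk; exact hq ((h' k hk) ▸ hk)
          subst hI
          exact le_sup_of_le_left inf_le_left
    · push_neg at h
      obtain ⟨k, hk, hkq, hkr⟩ := h
      have hb : I.inf (fun k => if k = q then ⊤ else if k = r then α ∅ else ⊥) ≤ ⊥ := by
        refine le_trans (Finset.inf_le hk) ?_
        simp [hkq, hkr]
      exact le_trans (le_trans inf_le_right hb) bot_le
  · apply sup_le
    · refine le_trans ?_ (Finset.le_sup (Finset.mem_univ (∅ : Finset (Fin n))))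
      simp
    · refine le_trans ?_ (Finset.le_sup (Finset.mem_univ ({q} : Finset (Fin n))))
      simp

/-- if `f : Lⁿ → L` is an associative lattice polynomial function, `n ≥ 3`,
then `α_f({i}) = α_f({1}) ⊓ α_f({n})` for every `i ∈ [n] \ {1, n}`. -/
theorem stmt9 {n : ℕ} (hn : 3 ≤ n) (f : (Fin n → L) → L)
    (hf : IsPolynomialFn f) (hassoc : AssocFin f)
    (i : Fin n) (h1 : (i : ℕ) ≠ 0) (h2 : (i : ℕ) ≠ n - 1) :
    f (charVec {i}) =
      f (charVec {(⟨0, by omega⟩ : Fin n)}) ⊓ f (charVec {(⟨n - 1, by omega⟩ : Fin n)}) := by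
  obtain ⟨α, hα⟩ := hf
  have hi : (i : ℕ) < n := i.isLt
  set k : ℕ := n - 1 - (i : ℕ) with hkdef
  have hk1 : 1 ≤ k := by omega
  have hik : (i : ℕ) + k = n - 1 := by omega
  -- value of f on one-point vectors
  have fsv : ∀ (a : ℕ) (ha : a < n) (v : L),
      f (fun t : Fin n => if (t : ℕ) = a then v else ⊥)
        = α ∅ ⊔ (α {(⟨a, ha⟩ : Fin n)} ⊓ v) := by
    intro a ha v
    rw [hα]
    have e : (fun t : Fin n => if (t : ℕ) = a then v else ⊥)
        = fun t : Fin n => if t = (⟨a, ha⟩ : Fin n) then v else ⊥ := by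
      funext t; simp [Fin.ext_iff]
    rw [e, myFA]
  have ftv : ∀ (a b : ℕ) (ha : a < n) (hb : b < n), a ≠ b →
      f (fun t : Fin n => if (t : ℕ) = a then ⊤ else if (t : ℕ) = b then α ∅ else ⊥)
        = α ∅ ⊔ α {(⟨a, ha⟩ : Fin n)} := by
    intro a b ha hb hab
    rw [hα]
    have e : (fun t : Fin n => if (t : ℕ) = a then ⊤ else if (t : ℕ) = b then α ∅ else ⊥)
        = fun t : Fin n => if t = (⟨a, ha⟩ : Fin n) then ⊤
            else if t = (⟨b, hb⟩ : Fin n) then α ∅ else ⊥ := by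
      funext t; simp [Fin.ext_iff]
    rw [e, myFB α _ _ (by simp [Fin.ext_iff]; exact hab)]
  have fbot : f (fun _ : Fin n => ⊥) = α ∅ := by
    have e : (fun _ : Fin n => (⊥:L)) = fun t : Fin n => if (t : ℕ) = 0 then ⊥ else ⊥ := by
      funext t; simp
    rw [e, fsv 0 (by omega)]
    simp
  have fch : ∀ j : Fin n, f (charVec {j}) = α ∅ ⊔ α {j} := by
    intro j
    have e : (charVec {j} : Fin n → L) = fun t : Fin n => if (t : ℕ) = (j : ℕ) then ⊤ else ⊥ := by
      funext t; simp [charVec, Fin.ext_iff]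
    rw [e, fsv (j : ℕ) j.isLt ⊤]
    simp
  have comb : ∀ u v : L, α ∅ ⊔ (u ⊓ (α ∅ ⊔ v)) = (α ∅ ⊔ u) ⊓ (α ∅ ⊔ v) := by
    intro u v
    rw [sup_inf_left, ← sup_assoc, sup_idem]
  -- E1
  have key1 := hassoc (List.replicate 0 (⊥:L)) (List.replicate (n-1) ⊥)
      (List.replicate (i:ℕ) ⊥) (List.replicate k ⊥)
      (List.replicate (n-1) ⊥ ++ [⊤] ++ List.replicate 0 ⊥)
      (List.replicate k ⊥ ++ [⊤] ++ List.replicate (i:ℕ) ⊥)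
      (by simp only [List.length_append, List.length_replicate, List.length_cons, List.length_nil]; omega)
      (by simp only [List.length_append, List.length_replicate, List.length_cons, List.length_nil]; omega)
      (by simp only [List.length_replicate]; omega)
      (by simp only [List.length_replicate]; omega)
      (by
        simp only [List.replicate_zero, List.append_nil, List.nil_append, List.append_assoc]
        rw [myRepcat hik]
        conv_rhs => rw [← List.append_assoc, myRepcat hik])
      (by simp only [List.length_append, List.length_replicate, List.length_cons, List.length_nil]; omega)
      (by simp only [List.length_append, List.length_replicate, List.length_cons, List.length_nil]; omega)
  rw [liftF_one (n-1) 0 f ⊤, liftF_one k (i:ℕ) f ⊤, fsv (n-1) (by omega) ⊤,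
      fsv k (by omega) ⊤, liftF_one 0 (n-1) f, liftF_one (i:ℕ) k f,
      fsv 0 (by omega), fsv (i:ℕ) hi] at key1
  simp only [inf_top_eq] at key1
  rw [comb, comb] at key1
  -- E2
  have key2 := hassoc (List.replicate 0 (⊥:L))
      (List.replicate ((i:ℕ)-1) ⊥ ++ [⊤] ++ List.replicate k ⊥)
      (List.replicate (i:ℕ) ⊥) (List.replicate k ⊥)
      (List.replicate n ⊥)
      (List.replicate (n-1) ⊥ ++ [⊤] ++ List.replicate 0 ⊥)
      (by simp only [List.length_replicate])
      (by simp only [List.length_append, List.length_replicate, List.length_cons, List.length_nil]; omega)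
      (by simp only [List.length_append, List.length_replicate, List.length_cons, List.length_nil]; omega)
      (by simp only [List.length_replicate]; omega)
      (by
        simp only [List.replicate_zero, List.append_nil, List.nil_append, List.append_assoc]
        conv_lhs => rw [← List.append_assoc, myRepcat (show n + ((i:ℕ)-1) = (i:ℕ) + (n-1) by omega)]
        conv_rhs => rw [← List.append_assoc, myRepcat (rfl : (i:ℕ) + (n-1) = (i:ℕ) + (n-1))])
      (by simp only [List.length_append, List.length_replicate, List.length_cons, List.length_nil]; omega)
      (by simp only [List.length_append, List.length_replicate, List.length_cons, List.length_nil]; omega)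
  rw [liftF_rep f, fbot, liftF_two 0 ((i:ℕ)-1) k f,
      liftF_one (n-1) 0 f ⊤, fsv (n-1) (by omega) ⊤,
      liftF_one (i:ℕ) k f, fsv (i:ℕ) hi] at key2
  have e2f : (fun t : Fin n => if (t:ℕ) = 0 then α ∅ else if (t:ℕ) = 0+1+((i:ℕ)-1) then ⊤ else ⊥)
      = fun t : Fin n => if (t:ℕ) = (i:ℕ) then ⊤ else if (t:ℕ) = 0 then α ∅ else ⊥ := by
    funext t
    rw [show 0+1+((i:ℕ)-1) = (i:ℕ) by omega]
    by_cases h0 : (t:ℕ) = 0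
    · rw [if_pos h0, if_neg (by omega), if_pos h0]
    · rw [if_neg h0]
      by_cases hii : (t:ℕ) = (i:ℕ)
      · rw [if_pos hii, if_pos hii]
      · rw [if_neg hii, if_neg hii, if_neg h0]
  rw [e2f, ftv (i:ℕ) 0 hi (by omega) h1] at key2
  simp only [inf_top_eq] at key2
  rw [comb] at key2
  -- E3
  have key3 := hassoc (List.replicate (i:ℕ) (⊥:L) ++ [⊤] ++ List.replicate 0 ⊥)
      (List.replicate (n-2-(i:ℕ)) ⊥)
      (List.replicate 0 ⊥) (List.replicate (n-1) ⊥)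
      (List.replicate n ⊥)
      (List.replicate (i:ℕ) ⊥ ++ [⊤] ++ List.replicate k ⊥)
      (by simp only [List.length_replicate])
      (by simp only [List.length_append, List.length_replicate, List.length_cons, List.length_nil]; omega)
      (by simp only [List.length_append, List.length_replicate, List.length_cons, List.length_nil]; omega)
      (by simp only [List.length_replicate]; omega)
      (by
        simp only [List.replicate_zero, List.append_nil, List.nil_append, List.append_assoc]
        rw [myRepcat (rfl : n + (n-2-(i:ℕ)) = n + (n-2-(i:ℕ))),
            myRepcat (show k + (n-1) = n + (n-2-(i:ℕ)) by omega)])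
      (by simp only [List.length_append, List.length_replicate, List.length_cons, List.length_nil]; omega)
      (by simp only [List.length_append, List.length_replicate, List.length_cons, List.length_nil]; omega)
  rw [liftF_rep f, fbot, liftF_two' (i:ℕ) 0 (n-2-(i:ℕ)) f,
      liftF_one (i:ℕ) k f ⊤, fsv (i:ℕ) hi ⊤,
      liftF_one 0 (n-1) f, fsv 0 (by omega)] at key3
  have e3f : (fun t : Fin n => if (t:ℕ) = (i:ℕ) then ⊤ else if (t:ℕ) = (i:ℕ)+1+0 then α ∅ else ⊥)
      = fun t : Fin n => if (t:ℕ) = (i:ℕ) then ⊤ else if (t:ℕ) = (i:ℕ)+1 then α ∅ else ⊥ := by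
    funext t
    rw [show (i:ℕ)+1+0 = (i:ℕ)+1 by omega]
  rw [e3f, ftv (i:ℕ) ((i:ℕ)+1) hi (by omega) (by omega)] at key3
  simp only [inf_top_eq] at key3
  rw [comb] at key3
  -- finish
  rw [fch, fch, fch]
  simp only [Fin.eta] at key1 key2 key3
  apply le_antisymm
  · exact le_inf (key3.le.trans inf_le_left) (key2.le.trans inf_le_right)
  · exact key1.le.trans inf_le_left
end

section
/- Let L be a bounded distributive lattice. A function f : L^n → L is a lattice polynomial function if and only if it satisfies all of: (a) f is nondecreasing in each variable; (b) for every position k and all fixed x ∈ L^{k−1}, z ∈ L^{n−k}, the map y ↦ f(x y z) preserves binary meets and binary joins; (c) for every position k and all fixed x ∈ L^{k−1}, z ∈ L^{n−k}, the set {f(x y z) : y ∈ L} is convex in L; (d) the range {f(x) : x ∈ L^n} is convex in L; (e) f(x f(x y z) z) = f(x y z) for every position k and all x ∈ L^{k−1}, y ∈ L, z ∈ L^{n−k}. -/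
variable {X : Type*}

variable {L : Type*} [DistribLattice L] [BoundedOrder L]

set_option linter.unusedSectionVars false

private lemma sup_decomp {ι : Type*} (s : Finset ι) (p q r : ι → L) (y : L)
    (h : ∀ i ∈ s, p i = q i ⊔ (r i ⊓ y)) :
    s.sup p = s.sup q ⊔ (s.sup r ⊓ y) := by
  rw [Finset.sup_inf_distrib_right]
  apply le_antisymm
  · exact Finset.sup_le fun i hi => (h i hi).le.trans
      (sup_le_sup (Finset.le_sup hi) (Finset.le_sup (f := fun i => r i ⊓ y) hi))
  · refine sup_le (Finset.sup_le fun i hi => ?_) (Finset.sup_le fun i hi => ?_)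
    · exact le_trans (by rw [h i hi]; exact le_sup_left) (Finset.le_sup hi)
    · exact le_trans (by rw [h i hi]; exact le_sup_right) (Finset.le_sup hi)

private lemma inf_update_mem {n : ℕ} {I : Finset (Fin n)} {k : Fin n} (hk : k ∈ I)
    (w : Fin n → L) (y : L) :
    I.inf (Function.update w k y) = y ⊓ (I.erase k).inf w := by
  conv_lhs => rw [← Finset.insert_erase hk]
  rw [Finset.inf_insert, Function.update_self]
  congr 1
  exact Finset.inf_congr rfl fun i hi => Function.update_of_ne (Finset.ne_of_mem_erase hi) _ _

private lemma inf_update_notMem {n : ℕ} {I : Finset (Fin n)} {k : Fin n} (hk : k ∉ I)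
    (w : Fin n → L) (y : L) :
    I.inf (Function.update w k y) = I.inf w :=
  Finset.inf_congr rfl fun i hi => Function.update_of_ne (ne_of_mem_of_not_mem hi hk) _ _

private lemma poly_decomp {n : ℕ} {f : (Fin n → L) → L} (hf : IsPolynomialFn f)
    (w : Fin n → L) (k : Fin n) (y : L) :
    f (Function.update w k y) =
      f (Function.update w k ⊥) ⊔ (f (Function.update w k ⊤) ⊓ y) := by
  obtain ⟨α, hα⟩ := hf
  rw [hα, hα, hα]
  apply sup_decomp
  intro I _
  by_cases hk : k ∈ I
  · rw [inf_update_mem hk, inf_update_mem hk, inf_update_mem hk]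
    simp only [bot_inf_eq, inf_bot_eq, top_inf_eq, bot_sup_eq]
    ac_rfl
  · rw [inf_update_notMem hk, inf_update_notMem hk, inf_update_notMem hk, sup_inf_self]

private lemma poly_const {n : ℕ} {f : (Fin n → L) → L} (hf : IsPolynomialFn f) (c : L) :
    f (fun _ => c) = f (fun _ => ⊥) ⊔ (f (fun _ => ⊤) ⊓ c) := by
  obtain ⟨α, hα⟩ := hf
  rw [hα, hα, hα]
  apply sup_decomp
  intro I _
  rcases I.eq_empty_or_nonempty with rfl | hI
  · simp [sup_inf_self]
  · rw [Finset.inf_const hI, Finset.inf_const hI, Finset.inf_const hI]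
    simp

private lemma poly_mono {n : ℕ} {f : (Fin n → L) → L} (hf : IsPolynomialFn f) :
    Monotone f := by
  obtain ⟨α, hα⟩ := hf
  intro u v huv
  rw [hα, hα]
  exact Finset.sup_mono_fun fun I _ =>
    inf_le_inf_left _ (Finset.inf_mono_fun fun i _ => huv i)

private lemma update_mono {n : ℕ} (w : Fin n → L) (k : Fin n) :
    Monotone fun y : L => Function.update w k y := by
  intro s t hst i
  rcases eq_or_ne i k with rfl | h
  · simpa using hst
  · simp [Function.update_of_ne h]

private lemma back_decomp {n : ℕ} {f : (Fin n → L) → L}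
    (ha : Monotone f)
    (hb : ∀ (w : Fin n → L) (k : Fin n) (y y' : L),
      f (Function.update w k (y ⊓ y')) =
          f (Function.update w k y) ⊓ f (Function.update w k y') ∧
        f (Function.update w k (y ⊔ y')) =
          f (Function.update w k y) ⊔ f (Function.update w k y'))
    (hc : ∀ (w : Fin n → L) (k : Fin n),
      (Set.range fun y : L => f (Function.update w k y)).OrdConnected)
    (he : ∀ (w : Fin n → L) (k : Fin n), f (Function.update w k (f w)) = f w)
    (w : Fin n → L) (k : Fin n) (y : L) :
    f (Function.update w k y) =
      f (Function.update w k ⊥) ⊔ (f (Function.update w k ⊤) ⊓ y) := by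
  have hmono : ∀ {s t : L}, s ≤ t →
      f (Function.update w k s) ≤ f (Function.update w k t) :=
    fun hst => ha (update_mono w k hst)
  have hidem : ∀ t, f (Function.update w k (f (Function.update w k t))) =
      f (Function.update w k t) := by
    intro t
    have h := he (Function.update w k t) k
    rwa [Function.update_idem] at h
  have hAB : f (Function.update w k ⊥) ≤ f (Function.update w k ⊤) := hmono bot_le
  have hAy : f (Function.update w k ⊥) ≤ f (Function.update w k y) := hmono bot_le
  have hyB : f (Function.update w k y) ≤ f (Function.update w k ⊤) := hmono le_top
  have hcmem : f (Function.update w k ⊥) ⊔ (f (Function.update w k ⊤) ⊓ y) ∈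
      Set.range fun t : L => f (Function.update w k t) :=
    (hc w k).out ⟨⊥, rfl⟩ ⟨⊤, rfl⟩ ⟨le_sup_left, sup_le hAB inf_le_left⟩
  obtain ⟨t, ht⟩ := hcmem
  have ht' : f (Function.update w k t) =
      f (Function.update w k ⊥) ⊔ (f (Function.update w k ⊤) ⊓ y) := ht
  have hcfix : f (Function.update w k
        (f (Function.update w k ⊥) ⊔ (f (Function.update w k ⊤) ⊓ y))) =
      f (Function.update w k ⊥) ⊔ (f (Function.update w k ⊤) ⊓ y) := by
    rw [← ht']; exact hidem t
  have hfixA : f (Function.update w k (f (Function.update w k ⊥))) =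
      f (Function.update w k ⊥) := hidem ⊥
  have hfixB : f (Function.update w k (f (Function.update w k ⊤))) =
      f (Function.update w k ⊤) := hidem ⊤
  have h1 : f (Function.update w k (f (Function.update w k ⊤) ⊓ y)) =
      f (Function.update w k y) := by
    rw [(hb w k (f (Function.update w k ⊤)) y).1, hfixB, inf_eq_right.mpr hyB]
  have h2 : f (Function.update w k (f (Function.update w k ⊥) ⊔ y)) =
      f (Function.update w k y) := by
    rw [(hb w k (f (Function.update w k ⊥)) y).2, hfixA, sup_eq_right.mpr hAy]
  rw [← hcfix]
  apply le_antisymm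
  · rw [← h1]; exact hmono le_sup_right
  · rw [← h2]; exact hmono (sup_le le_sup_left (inf_le_right.trans le_sup_right))

private def pvec {n : ℕ} (x : Fin n → L) (m : ℕ) (I : Finset (Fin n)) : Fin n → L :=
  fun i => if (i : ℕ) < m then (if i ∈ I then (⊤ : L) else ⊥) else x i

private def pT {n : ℕ} (f : (Fin n → L) → L) (x : Fin n → L) (m : ℕ)
    (I : Finset (Fin n)) : L :=
  f (pvec x m I) ⊓ (I.filter fun i : Fin n => (i : ℕ) < m).inf x

private lemma step2 {n : ℕ} {f : (Fin n → L) → L}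
    (hd : ∀ (w : Fin n → L) (k : Fin n) (y : L),
      f (Function.update w k y) =
        f (Function.update w k ⊥) ⊔ (f (Function.update w k ⊤) ⊓ y))
    (x : Fin n → L) :
    f x = Finset.univ.sup fun I : Finset (Fin n) => f (charVec I) ⊓ I.inf x := by
  have key : ∀ m, m ≤ n → (Finset.univ.sup (pT f x m)) = f x := by
    intro m
    induction m with
    | zero =>
      intro _
      have h1 : ∀ I : Finset (Fin n), pT f x 0 I = f x := by
        intro I
        have hv : pvec x 0 I = x := by funext i; simp [pvec]
        have hfl : (I.filter fun i : Fin n => (i : ℕ) < 0) = ∅ := by simp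
        simp [pT, hv, hfl]
      calc Finset.univ.sup (pT f x 0)
          = Finset.univ.sup (fun _ : Finset (Fin n) => f x) :=
            Finset.sup_congr rfl fun I _ => h1 I
        _ = f x := Finset.sup_const Finset.univ_nonempty _
    | succ m ih =>
      intro hm
      have hmn : m < n := hm
      rw [← ih (le_of_lt hmn)]
      set k : Fin n := ⟨m, hmn⟩ with hkdef
      have hkv : (k : ℕ) = m := rfl
      have hveck : ∀ I : Finset (Fin n), pvec x m I k = x k := by
        intro I; simp [pvec, hkv]
      have hupbot : ∀ I : Finset (Fin n),
          Function.update (pvec x m I) k ⊥ = pvec x (m + 1) (I.erase k) := by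
        intro I; funext i
        rcases eq_or_ne i k with rfl | hik
        · simp [pvec, hkv]
        · rw [Function.update_of_ne hik]
          rcases lt_trichotomy (i : ℕ) m with h | h | h
          · simp [pvec, h, Nat.lt_succ_of_lt h, Finset.mem_erase, hik]
          · exact absurd (Fin.ext (h.trans hkv.symm)) hik
          · have h1 : ¬(i : ℕ) < m := by omega
            have h2 : ¬(i : ℕ) < m + 1 := by omega
            simp [pvec, h1, h2]
      have huptop : ∀ I : Finset (Fin n),
          Function.update (pvec x m I) k ⊤ = pvec x (m + 1) (insert k I) := by
        intro I; funext i
        rcases eq_or_ne i k with rfl | hik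
        · simp [pvec, hkv]
        · rw [Function.update_of_ne hik]
          rcases lt_trichotomy (i : ℕ) m with h | h | h
          · simp [pvec, h, Nat.lt_succ_of_lt h, Finset.mem_insert, hik]
          · exact absurd (Fin.ext (h.trans hkv.symm)) hik
          · have h1 : ¬(i : ℕ) < m := by omega
            have h2 : ¬(i : ℕ) < m + 1 := by omega
            simp [pvec, h1, h2]
      have hfilter_erase : ∀ I : Finset (Fin n),
          ((I.erase k).filter fun i : Fin n => (i : ℕ) < m + 1) =
            I.filter fun i : Fin n => (i : ℕ) < m := by
        intro I; ext i
        simp only [Finset.mem_filter, Finset.mem_erase]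
        constructor
        · rintro ⟨⟨hik, hiI⟩, hlt⟩
          refine ⟨hiI, ?_⟩
          rcases Nat.lt_succ_iff_lt_or_eq.mp hlt with h | h
          · exact h
          · exact absurd (Fin.ext (h.trans hkv.symm)) hik
        · rintro ⟨hiI, hlt⟩
          refine ⟨⟨?_, hiI⟩, Nat.lt_succ_of_lt hlt⟩
          intro h
          rw [h, hkv] at hlt
          exact lt_irrefl m hlt
      have hfilter_insert : ∀ I : Finset (Fin n),
          ((insert k I).filter fun i : Fin n => (i : ℕ) < m + 1) =
            insert k (I.filter fun i : Fin n => (i : ℕ) < m) := by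
        intro I; ext i
        simp only [Finset.mem_filter, Finset.mem_insert]
        constructor
        · rintro ⟨rfl | hiI, hlt⟩
          · exact Or.inl rfl
          · rcases Nat.lt_succ_iff_lt_or_eq.mp hlt with h | h
            · exact Or.inr ⟨hiI, h⟩
            · exact Or.inl (Fin.ext (h.trans hkv.symm))
        · rintro (rfl | ⟨hiI, hlt⟩)
          · exact ⟨Or.inl rfl, by rw [hkv]; exact Nat.lt_succ_self m⟩
          · exact ⟨Or.inr hiI, Nat.lt_succ_of_lt hlt⟩
      have claim : ∀ I : Finset (Fin n),
          pT f x m I = pT f x (m + 1) (I.erase k) ⊔ pT f x (m + 1) (insert k I) := by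
        intro I
        have e1 : f (pvec x m I) =
            f (Function.update (pvec x m I) k ⊥) ⊔
              (f (Function.update (pvec x m I) k ⊤) ⊓ x k) := by
          conv_lhs => rw [← Function.update_eq_self k (pvec x m I)]
          rw [hveck I]
          exact hd (pvec x m I) k (x k)
        unfold pT
        rw [e1, hupbot I, huptop I, hfilter_erase I, hfilter_insert I,
          Finset.inf_insert, inf_sup_right, inf_assoc]
      apply le_antisymm
      · apply Finset.sup_le
        intro J _
        by_cases hkJ : k ∈ J
        · have hle : pT f x (m + 1) J ≤ pT f x m J := by
            rw [claim J, Finset.insert_eq_self.mpr hkJ]; exact le_sup_right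
          exact hle.trans (Finset.le_sup (Finset.mem_univ J))
        · have hle : pT f x (m + 1) J ≤ pT f x m J := by
            rw [claim J, Finset.erase_eq_of_notMem hkJ]; exact le_sup_left
          exact hle.trans (Finset.le_sup (Finset.mem_univ J))
      · apply Finset.sup_le
        intro I _
        rw [claim I]
        exact sup_le (Finset.le_sup (Finset.mem_univ _)) (Finset.le_sup (Finset.mem_univ _))
  rw [← key n le_rfl]
  apply Finset.sup_congr rfl
  intro I _
  have hv : pvec x n I = charVec I := by
    funext i; simp [pvec, charVec, i.isLt]
  have hfl : (I.filter fun i : Fin n => (i : ℕ) < n) = I :=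
    Finset.filter_true_of_mem fun i _ => i.isLt
  rw [pT, hv, hfl]

/-- `f : Lⁿ → L` is a lattice polynomial function if and only if it is
(a) nondecreasing, (b) ∧- and ∨-preserving in each variable, (c) has convex range in
each variable, (d) has convex range, and (e) satisfies `f(x f(x y z) z) = f(x y z)`. -/
theorem stmt16 {n : ℕ} (f : (Fin n → L) → L) :
    IsPolynomialFn f ↔
      (Monotone f ∧
        (∀ (w : Fin n → L) (k : Fin n) (y y' : L),
          f (Function.update w k (y ⊓ y')) =
              f (Function.update w k y) ⊓ f (Function.update w k y') ∧
            f (Function.update w k (y ⊔ y')) =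
              f (Function.update w k y) ⊔ f (Function.update w k y')) ∧
        (∀ (w : Fin n → L) (k : Fin n),
          (Set.range fun y : L => f (Function.update w k y)).OrdConnected) ∧
        (Set.range f).OrdConnected ∧
        (∀ (w : Fin n → L) (k : Fin n), f (Function.update w k (f w)) = f w)) := by
  constructor
  · intro hf
    have hd := poly_decomp hf
    refine ⟨poly_mono hf, ?_, ?_, ?_, ?_⟩
    · intro w k y y'
      constructor
      · rw [hd w k (y ⊓ y'), hd w k y, hd w k y', ← sup_inf_left, inf_inf_distrib_left]
      · rw [hd w k (y ⊔ y'), hd w k y, hd w k y', ← sup_sup_distrib_left, inf_sup_left]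
    · intro w k
      constructor
      rintro _ ⟨y1, rfl⟩ _ ⟨y2, rfl⟩ c hmemc
      have hy1 : f (Function.update w k y1) ≤ c := hmemc.1
      have hy2 : c ≤ f (Function.update w k y2) := hmemc.2
      refine ⟨c, show f (Function.update w k c) = c from ?_⟩
      have h1 : f (Function.update w k ⊥) ≤ c :=
        le_trans (by rw [hd w k y1]; exact le_sup_left) hy1
      have h2 : c ≤ f (Function.update w k ⊥) ⊔ f (Function.update w k ⊤) :=
        hy2.trans (by rw [hd w k y2]; exact sup_le_sup_left inf_le_left _)
      rw [hd w k c, sup_inf_left, sup_eq_right.mpr h1, inf_eq_right.mpr h2]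
    · constructor
      rintro _ ⟨u, rfl⟩ _ ⟨v, rfl⟩ c hmemc
      have hu : f u ≤ c := hmemc.1
      have hv : c ≤ f v := hmemc.2
      refine ⟨fun _ => c, ?_⟩
      have h1 : f (fun _ => ⊥) ≤ c :=
        le_trans (poly_mono hf fun i => bot_le) hu
      have h2 : c ≤ f (fun _ => ⊥) ⊔ f (fun _ => ⊤) :=
        (hv.trans (poly_mono hf fun i => le_top)).trans le_sup_right
      rw [poly_const hf c, sup_inf_left, sup_eq_right.mpr h1, inf_eq_right.mpr h2]
    · intro w k
      have hw : f w = f (Function.update w k ⊥) ⊔ (f (Function.update w k ⊤) ⊓ w k) := by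
        conv_lhs => rw [← Function.update_eq_self k w]
        exact hd w k (w k)
      rw [hd w k (f w), hw]
      apply le_antisymm
      · apply sup_le le_sup_left
        rw [inf_sup_left]
        exact sup_le (inf_le_right.trans le_sup_left) (inf_le_right.trans le_sup_right)
      · exact sup_le_sup_left (le_inf inf_le_left le_sup_right) _
  · rintro ⟨ha, hb, hc, -, he⟩
    exact ⟨fun I => f (charVec I), step2 (back_decomp ha hb hc he)⟩
end

section
/- Let L be a bounded distributive lattice and let g : L* → L be an associative function. The following are equivalent: (i) g is a range-idempotent polynomial function; (ii) g is a polynomial function satisfying g_2(0,0) = g_1(0) and g_2(1,1) = g_1(1); (iii) g is range-idempotent and, for every n ≥ 1, g_n satisfies: (a) g_n is nondecreasing in each variable; (b) for every position k and all fixed x ∈ L^{k−1}, z ∈ L^{n−k}, the map y ↦ g_n(x y z) preserves binary meets and binary joins; (c) for every position k and all fixed x ∈ L^{k−1}, z ∈ L^{n−k}, the set {g_n(x y z) : y ∈ L} is convex in L; (d) the range {g_n(x) : x ∈ L^n} is convex in L. -/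
variable {X : Type*}

variable {L : Type*} [DistribLattice L] [BoundedOrder L]

namespace S17

lemma collapse {g : List X → X} (hg : AssocStar g) (x z y : List X) (hy : y ≠ []) :
    g (x ++ [g y] ++ z) = g (x ++ y ++ z) := by
  have h := hg x y z (x ++ y) [] z (by simp)
  cases y with
  | nil => exact absurd rfl hy
  | cons a l => simpa [strOf] using h

lemma affine_sup {ι : Type*} (s : Finset ι) (h : ι → L → L)
    (H : ∀ i ∈ s, ∀ t, h i t = h i ⊥ ⊔ (h i ⊤ ⊓ t)) (t : L) :
    (s.sup fun i => h i t) = (s.sup fun i => h i ⊥) ⊔ ((s.sup fun i => h i ⊤) ⊓ t) := by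
  classical
  induction s using Finset.cons_induction with
  | empty => simp
  | cons a s ha ih =>
    simp only [Finset.sup_cons]
    rw [ih (fun i hi t => H i (Finset.mem_cons.2 (Or.inr hi)) t),
      H a (Finset.mem_cons_self a s), inf_sup_right]
    exact sup_sup_sup_comm _ _ _ _

lemma poly_section {n : ℕ} {f : (Fin n → L) → L} (hf : IsPolynomialFn f)
    (w : Fin n → L) (k : Fin n) (y : L) :
    f (Function.update w k y) =
      f (Function.update w k ⊥) ⊔ (f (Function.update w k ⊤) ⊓ y) := by
  classical
  obtain ⟨α, hα⟩ := hf
  have key : ∀ I : Finset (Fin n), ∀ t : L,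
      α I ⊓ I.inf (Function.update w k t)
        = α I ⊓ I.inf (Function.update w k ⊥)
            ⊔ (α I ⊓ I.inf (Function.update w k ⊤)) ⊓ t := by
    intro I t
    by_cases hk : k ∈ I
    · have hinf : ∀ t : L, I.inf (Function.update w k t) = t ⊓ (I.erase k).inf w := by
        intro t
        have h1 : I.inf (Function.update w k t)
            = (insert k (I.erase k)).inf (Function.update w k t) := by
          rw [Finset.insert_erase hk]
        rw [h1, Finset.inf_insert, Function.update_self]
        congr 1
        exact Finset.inf_congr rfl (fun i hi =>
          Function.update_of_ne (Finset.ne_of_mem_erase hi) _ _)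
      rw [hinf, hinf, hinf]
      simp [inf_comm, inf_assoc, inf_left_comm]
    · have hinf : ∀ t : L, I.inf (Function.update w k t) = I.inf w := by
        intro t
        exact Finset.inf_congr rfl (fun i hi =>
          Function.update_of_ne (fun h => hk (by rwa [h] at hi)) _ _)
      rw [hinf, hinf, hinf, sup_inf_self]
  rw [hα, hα, hα]
  exact affine_sup _ _ (fun I _ t => key I t) y

lemma poly_diag {n : ℕ} {f : (Fin n → L) → L} (hf : IsPolynomialFn f) (t : L) :
    f (fun _ => t) = f (fun _ => ⊥) ⊔ (f (fun _ => ⊤) ⊓ t) := by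
  classical
  obtain ⟨α, hα⟩ := hf
  have key : ∀ I : Finset (Fin n), ∀ t : L,
      α I ⊓ I.inf (fun _ => t)
        = α I ⊓ I.inf (fun _ => (⊥ : L)) ⊔ (α I ⊓ I.inf (fun _ => (⊤ : L))) ⊓ t := by
    intro I t
    rcases I.eq_empty_or_nonempty with h | h
    · simp [h]
    · rw [Finset.inf_const h, Finset.inf_const h, Finset.inf_const h]
      simp [inf_comm]
  rw [hα, hα, hα]
  exact affine_sup _ _ (fun I _ t => key I t) t

lemma poly_mono {n : ℕ} {f : (Fin n → L) → L} (hf : IsPolynomialFn f) : Monotone f := by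
  classical
  obtain ⟨α, hα⟩ := hf
  intro x y hxy
  rw [hα, hα]
  exact Finset.sup_mono_fun (fun I _ =>
    inf_le_inf_left _ (Finset.inf_mono_fun (fun i _ => hxy i)))

omit [BoundedOrder L] in
lemma sandwich {c d m y₁ y₂ : L} (h₁ : c ⊔ (d ⊓ y₁) ≤ m) (h₂ : m ≤ c ⊔ (d ⊓ y₂)) :
    c ⊔ (d ⊓ m) = m := by
  have hc : c ≤ m := le_trans le_sup_left h₁
  apply le_antisymm (sup_le hc inf_le_right)
  calc m = m ⊓ (c ⊔ (d ⊓ y₂)) := (inf_eq_left.2 h₂).symm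
  _ = (m ⊓ c) ⊔ (m ⊓ (d ⊓ y₂)) := inf_sup_left _ _ _
  _ ≤ c ⊔ (d ⊓ m) := sup_le_sup inf_le_right
      (le_inf (le_trans inf_le_right inf_le_left) inf_le_left)

lemma poly_const {n : ℕ} (k : L) : IsPolynomialFn (fun _ : Fin n → L => k) := by
  classical
  refine ⟨fun _ => k, fun x => ?_⟩
  apply le_antisymm
  · have := Finset.le_sup (f := fun I : Finset (Fin n) => k ⊓ I.inf x)
      (Finset.mem_univ (∅ : Finset (Fin n)))
    simpa using this
  · exact Finset.sup_le fun I _ => inf_le_left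

lemma poly_proj {n : ℕ} (j : Fin n) : IsPolynomialFn (fun x : Fin n → L => x j) := by
  classical
  refine ⟨fun I => if I = {j} then ⊤ else ⊥, fun x => ?_⟩
  apply le_antisymm
  · have := Finset.le_sup (f := fun I : Finset (Fin n) =>
      (if I = {j} then (⊤:L) else ⊥) ⊓ I.inf x) (Finset.mem_univ ({j} : Finset (Fin n)))
    simpa using this
  · refine Finset.sup_le fun I _ => ?_
    by_cases h : I = {j}
    · subst h; simp
    · simp [h]

lemma poly_sup {n : ℕ} {f h : (Fin n → L) → L} (hf : IsPolynomialFn f)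
    (hh : IsPolynomialFn h) : IsPolynomialFn (fun x => f x ⊔ h x) := by
  classical
  obtain ⟨a, ha⟩ := hf; obtain ⟨b, hb⟩ := hh
  refine ⟨fun I => a I ⊔ b I, fun x => ?_⟩
  dsimp only
  rw [ha, hb]
  apply le_antisymm
  · refine sup_le (Finset.sup_le fun I _ => ?_) (Finset.sup_le fun I _ => ?_)
    · exact le_trans (inf_le_inf_right _ le_sup_left)
        (Finset.le_sup (f := fun I => (a I ⊔ b I) ⊓ I.inf x) (Finset.mem_univ I))
    · exact le_trans (inf_le_inf_right _ le_sup_right)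
        (Finset.le_sup (f := fun I => (a I ⊔ b I) ⊓ I.inf x) (Finset.mem_univ I))
  · refine Finset.sup_le fun I _ => ?_
    rw [inf_sup_right]
    exact sup_le_sup (Finset.le_sup (f := fun I => a I ⊓ I.inf x) (Finset.mem_univ I))
      (Finset.le_sup (f := fun I => b I ⊓ I.inf x) (Finset.mem_univ I))

lemma poly_inf {n : ℕ} {f h : (Fin n → L) → L} (hf : IsPolynomialFn f)
    (hh : IsPolynomialFn h) : IsPolynomialFn (fun x => f x ⊓ h x) := by
  classical
  obtain ⟨a, ha⟩ := hf; obtain ⟨b, hb⟩ := hh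
  set P : Finset (Finset (Fin n) × Finset (Fin n)) := Finset.univ ×ˢ Finset.univ with hP
  set γ : Finset (Fin n) → L :=
    fun K => (P.filter (fun p => p.1 ∪ p.2 = K)).sup (fun p => a p.1 ⊓ b p.2) with hγ
  refine ⟨γ, fun x => ?_⟩
  have expand : f x ⊓ h x = P.sup (fun p => (a p.1 ⊓ b p.2) ⊓ (p.1 ∪ p.2).inf x) := by
    rw [ha, hb, Finset.sup_inf_distrib_right, hP, Finset.sup_product_left]
    refine Finset.sup_congr rfl fun I _ => ?_
    rw [Finset.sup_inf_distrib_left]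
    refine Finset.sup_congr rfl fun J _ => ?_
    rw [Finset.inf_union, inf_inf_inf_comm]
  dsimp only
  rw [expand]
  apply le_antisymm
  · refine Finset.sup_le fun p _ => ?_
    have hpP : p ∈ P := by simp [hP]
    have h1 : a p.1 ⊓ b p.2 ≤ γ (p.1 ∪ p.2) := by
      rw [hγ]
      dsimp only
      exact Finset.le_sup (f := fun q : Finset (Fin n) × Finset (Fin n) => a q.1 ⊓ b q.2)
        (Finset.mem_filter.2 ⟨hpP, rfl⟩)
    have h2 : γ (p.1 ∪ p.2) ⊓ (p.1 ∪ p.2).inf x ≤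
        Finset.univ.sup fun I : Finset (Fin n) => γ I ⊓ I.inf x :=
      Finset.le_sup (f := fun I : Finset (Fin n) => γ I ⊓ I.inf x)
        (Finset.mem_univ (p.1 ∪ p.2))
    exact le_trans (inf_le_inf_right _ h1) h2
  · refine Finset.sup_le fun K _ => ?_
    rw [hγ]
    dsimp only
    rw [Finset.sup_inf_distrib_right]
    refine Finset.sup_le fun p hp => ?_
    obtain ⟨-, hpK⟩ := Finset.mem_filter.1 hp
    have hpP : p ∈ P := by simp [hP]
    have h3 : (a p.1 ⊓ b p.2) ⊓ (p.1 ∪ p.2).inf x ≤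
        P.sup (fun q => (a q.1 ⊓ b q.2) ⊓ (q.1 ∪ q.2).inf x) :=
      Finset.le_sup (f := fun q : Finset (Fin n) × Finset (Fin n) =>
        (a q.1 ⊓ b q.2) ⊓ (q.1 ∪ q.2).inf x) hpP
    rw [← hpK]
    exact h3

lemma poly_finSup {n : ℕ} {ι : Type*} (s : Finset ι) (h : ι → (Fin n → L) → L)
    (H : ∀ i ∈ s, IsPolynomialFn (h i)) :
    IsPolynomialFn (fun x => s.sup fun i => h i x) := by
  classical
  induction s using Finset.cons_induction with
  | empty => simpa using poly_const (⊥ : L)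
  | cons a s ha ih =>
    simp only [Finset.sup_cons]
    exact poly_sup (H a (Finset.mem_cons_self a s))
      (ih fun i hi => H i (Finset.mem_cons.2 (Or.inr hi)))

lemma poly_finInf {n : ℕ} {ι : Type*} (s : Finset ι) (h : ι → (Fin n → L) → L)
    (H : ∀ i ∈ s, IsPolynomialFn (h i)) :
    IsPolynomialFn (fun x => s.inf fun i => h i x) := by
  classical
  induction s using Finset.cons_induction with
  | empty => simpa using poly_const (⊤ : L)
  | cons a s ha ih =>
    simp only [Finset.inf_cons]
    exact poly_inf (H a (Finset.mem_cons_self a s))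
      (ih fun i hi => H i (Finset.mem_cons.2 (Or.inr hi)))

lemma poly_comp {m n : ℕ} {f : (Fin m → L) → L} (hf : IsPolynomialFn f)
    (u : Fin m → (Fin n → L) → L) (hu : ∀ i, IsPolynomialFn (u i)) :
    IsPolynomialFn (fun x => f (fun i => u i x)) := by
  classical
  obtain ⟨a, ha⟩ := hf
  have heq : (fun x : Fin n → L => f (fun i => u i x)) =
      fun x => Finset.univ.sup fun I : Finset (Fin m) => a I ⊓ I.inf (fun i => u i x) := by
    funext x; rw [ha]
  rw [heq]
  exact poly_finSup _ _ fun I _ => poly_inf (poly_const _) (poly_finInf _ _ fun i _ => hu i)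

lemma idem_hom_form (h : L → L)
    (hmeet : ∀ a b, h (a ⊓ b) = h a ⊓ h b)
    (hjoin : ∀ a b, h (a ⊔ b) = h a ⊔ h b)
    (hidem : ∀ a, h (h a) = h a)
    (hconv : (Set.range h).OrdConnected) (a : L) :
    h a = h ⊥ ⊔ (h ⊤ ⊓ a) := by
  have hmono : Monotone h := by
    intro u v huv
    have h0 : h (u ⊓ v) = h u ⊓ h v := hmeet u v
    rw [inf_eq_left.2 huv] at h0
    exact inf_eq_left.1 h0.symm
  set m := h ⊥ ⊔ (h ⊤ ⊓ a) with hm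
  have h1 : h ⊥ ≤ m := le_sup_left
  have h2 : m ≤ h ⊤ := sup_le (hmono bot_le) inf_le_left
  obtain ⟨b, hb⟩ := hconv.out ⟨⊥, rfl⟩ ⟨⊤, rfl⟩ ⟨h1, h2⟩
  have hfix : h m = m := by rw [← hb, hidem]
  have hcomp : h m = h a := by
    rw [hm, hjoin, hmeet, hidem, hidem]
    exact le_antisymm (sup_le (hmono bot_le) inf_le_right)
      (le_sup_right.trans (sup_le_sup_left (le_inf (hmono le_top) le_rfl) _))
  rw [← hcomp, hfix]

end S17

/-- for an associative `g : L* → L`, the following are equivalent: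
(i) `g` is a range-idempotent polynomial function; (ii) `g` is a polynomial function
with `g₂(0,0) = g₁(0)` and `g₂(1,1) = g₁(1)`; (iii) `g` is range-idempotent and each
`gₙ` is nondecreasing, ∧- and ∨-preserving in each variable, convex-ranged in each
variable, and convex-ranged. -/
theorem stmt17 (g : List L → L) (hg : AssocStar g) :
    ((RangeIdem g ∧ IsPolyStar g) ↔
        (IsPolyStar g ∧ g [⊥, ⊥] = g [⊥] ∧ g [⊤, ⊤] = g [⊤])) ∧
    ((RangeIdem g ∧ IsPolyStar g) ↔
        (RangeIdem g ∧ ∀ n : ℕ, 1 ≤ n →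
          (Monotone fun x : Fin n → L => g (List.ofFn x)) ∧
          (∀ (w : Fin n → L) (k : Fin n) (y y' : L),
            g (List.ofFn (Function.update w k (y ⊓ y'))) =
                g (List.ofFn (Function.update w k y)) ⊓
                  g (List.ofFn (Function.update w k y')) ∧
              g (List.ofFn (Function.update w k (y ⊔ y'))) =
                g (List.ofFn (Function.update w k y)) ⊔
                  g (List.ofFn (Function.update w k y'))) ∧
          (∀ (w : Fin n → L) (k : Fin n),
            (Set.range fun y : L => g (List.ofFn (Function.update w k y))).OrdConnected) ∧
          (Set.range fun x : Fin n → L => g (List.ofFn x)).OrdConnected)) := by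
  classical
  have hcol : ∀ x z y : List L, y ≠ [] → g (x ++ [g y] ++ z) = g (x ++ y ++ z) :=
    fun x z y hy => S17.collapse hg x z y hy
  have h1fix : ∀ y : List L, y ≠ [] → g [g y] = g y := by
    intro y hy; simpa using hcol [] [] y hy
  have ofFn1 : ∀ x : Fin 1 → L, List.ofFn x = [x 0] := fun x => by simp [List.ofFn_succ]
  have ofFn2 : ∀ x : Fin 2 → L, List.ofFn x = [x 0, x 1] := fun x => by
    simp [List.ofFn_succ]
  have cgl : ∀ a b : L, g [g [a], b] = g [a, b] := by
    intro a b; simpa using hcol [] [b] [a] (by simp)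
  have cgr : ∀ a b : L, g [a, g [b]] = g [a, b] := by
    intro a b; simpa using hcol [a] [] [b] (by simp)
  have a3L : ∀ a b d : L, g [g [a, b], d] = g [a, b, d] := by
    intro a b d; simpa using hcol [] [d] [a, b] (by simp)
  have a3R : ∀ a b d : L, g [a, g [b, d]] = g [a, b, d] := by
    intro a b d; simpa using hcol [a] [] [b, d] (by simp)
  -- Range-idempotency gives the diagonal identity (pure associativity argument).
  have diagRI : RangeIdem g → ∀ a : L, g [a, a] = g [a] := by
    intro hRI a
    have h2 : g [g [a], g [a]] = g [a] := by
      simpa [List.replicate] using hRI [a] (by simp) 2 (by norm_num)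
    have e1 : g [g [a], g [a]] = g [a, g [a]] := by
      simpa using hcol [] [g [a]] [a] (by simp)
    have e2 : g [a, g [a]] = g [a, a] := cgr a a
    rw [← h2, e1, e2]
  -- The diagonal identity plus associativity rebuilds range-idempotency.
  have buildRI : (∀ a : L, g [a, a] = g [a]) → RangeIdem g := by
    intro hdiag x hx n hn
    have ha : g [g x] = g x := h1fix x hx
    have key : ∀ m : ℕ, 1 ≤ m → g (List.replicate m (g x)) = g [g x] := by
      intro m hm
      induction m, hm using Nat.le_induction with
      | base => simp [List.replicate]
      | succ m hm ih =>
        have hrep : List.replicate m (g x) ≠ [] := by simp; omega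
        have e := hcol [g x] [] (List.replicate m (g x)) hrep
        simp only [List.append_nil] at e
        rw [List.replicate_succ, ← List.singleton_append, ← e, ih]
        rw [List.singleton_append]
        calc g [g x, g [g x]] = g [g x, g x] := by rw [ha]
        _ = g [g x] := hdiag (g x)
    rw [key n hn, ha]
  constructor
  · -- first equivalence
    constructor
    · rintro ⟨hRI, hP⟩
      exact ⟨hP, diagRI hRI ⊥, diagRI hRI ⊤⟩
    · rintro ⟨hP, hb, ht⟩
      refine ⟨buildRI ?_, hP⟩
      intro a
      have h2 : g (List.ofFn fun _ : Fin 2 => a) =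
          g (List.ofFn fun _ : Fin 2 => (⊥:L)) ⊔
            (g (List.ofFn fun _ : Fin 2 => (⊤:L)) ⊓ a) :=
        S17.poly_diag (hP 2 (by norm_num)) a
      have h1 : g (List.ofFn fun _ : Fin 1 => a) =
          g (List.ofFn fun _ : Fin 1 => (⊥:L)) ⊔
            (g (List.ofFn fun _ : Fin 1 => (⊤:L)) ⊓ a) :=
        S17.poly_diag (hP 1 (by norm_num)) a
      simp only [ofFn2] at h2
      simp only [ofFn1] at h1
      rw [h2, hb, ht, ← h1]
  · -- second equivalence
    constructor
    · rintro ⟨hRI, hP⟩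
      refine ⟨hRI, fun n hn => ?_⟩
      have hp := hP n hn
      have sect : ∀ (w : Fin n → L) (k : Fin n) (y : L),
          g (List.ofFn (Function.update w k y)) =
            g (List.ofFn (Function.update w k ⊥)) ⊔
              (g (List.ofFn (Function.update w k ⊤)) ⊓ y) :=
        fun w k y => S17.poly_section hp w k y
      refine ⟨S17.poly_mono hp, ?_, ?_, ?_⟩
      · intro w k y y'
        constructor
        · rw [sect w k (y ⊓ y'), sect w k y, sect w k y', inf_inf_distrib_left,
            sup_inf_left]
        · rw [sect w k (y ⊔ y'), sect w k y, sect w k y', inf_sup_left,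
            sup_sup_distrib_left]
      · intro w k
        rw [Set.ordConnected_def]
        rintro u ⟨y₁, hy₁⟩ v ⟨y₂, hy₂⟩ m hm
        have hy₁' : g (List.ofFn (Function.update w k y₁)) = u := hy₁
        have hy₂' : g (List.ofFn (Function.update w k y₂)) = v := hy₂
        refine ⟨m, ?_⟩
        show g (List.ofFn (Function.update w k m)) = m
        rw [sect w k m]
        exact S17.sandwich (y₁ := y₁) (y₂ := y₂)
          (by rw [← sect w k y₁, hy₁']; exact hm.1)
          (by rw [← sect w k y₂, hy₂']; exact hm.2)
      · rw [Set.ordConnected_def]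
        rintro u ⟨x₁, hx₁⟩ v ⟨x₂, hx₂⟩ m hm
        have hx₁' : g (List.ofFn x₁) = u := hx₁
        have hx₂' : g (List.ofFn x₂) = v := hx₂
        have hmono := S17.poly_mono hp
        have h1 : g (List.ofFn fun _ : Fin n => (⊥ : L)) ≤ m := by
          refine le_trans ?_ (le_trans hx₁'.le hm.1)
          exact hmono (fun i => bot_le)
        have h2 : m ≤ g (List.ofFn fun _ : Fin n => (⊤ : L)) := by
          refine le_trans (le_trans hm.2 (le_of_eq hx₂'.symm)) ?_
          exact hmono (fun i => le_top)
        refine ⟨fun _ => m, ?_⟩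
        show g (List.ofFn fun _ : Fin n => m) = m
        have hd : g (List.ofFn fun _ : Fin n => m) =
            g (List.ofFn fun _ : Fin n => (⊥:L)) ⊔
              (g (List.ofFn fun _ : Fin n => (⊤:L)) ⊓ m) :=
          S17.poly_diag hp m
        rw [hd]
        exact S17.sandwich (y₁ := (⊥:L)) (y₂ := (⊤:L))
          (by rw [inf_bot_eq, sup_bot_eq]; exact h1)
          (by rw [inf_top_eq]; exact le_trans h2 le_sup_right)
    · rintro ⟨hRI, hcond⟩
      refine ⟨hRI, ?_⟩
      obtain ⟨mono1, hom1, conv1v, conv1⟩ := hcond 1 le_rfl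
      obtain ⟨mono2, hom2, conv2v, conv2⟩ := hcond 2 (by norm_num)
      have upd1 : ∀ (w : Fin 1 → L) (y : L), Function.update w 0 y = fun _ => y := by
        intro w y; funext i; fin_cases i; simp
      have hom1m : ∀ y y' : L, g [y ⊓ y'] = g [y] ⊓ g [y'] := by
        intro y y'
        simpa [upd1, ofFn1] using (hom1 (fun _ => ⊥) 0 y y').1
      have hom1j : ∀ y y' : L, g [y ⊔ y'] = g [y] ⊔ g [y'] := by
        intro y y'
        simpa [upd1, ofFn1] using (hom1 (fun _ => ⊥) 0 y y').2
      have idem1 : ∀ a : L, g [g [a]] = g [a] := fun a => h1fix [a] (by simp)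
      have conv1' : (Set.range fun a : L => g [a]).OrdConnected := by
        have hfun : (fun y : L =>
            g (List.ofFn (Function.update (fun _ : Fin 1 => (⊥:L)) 0 y))) =
            fun a : L => g [a] := by
          funext y; rw [upd1, ofFn1]
        have h := conv1v (fun _ => ⊥) 0
        rwa [hfun] at h
      have form1 : ∀ a : L, g [a] = g [⊥] ⊔ (g [⊤] ⊓ a) :=
        S17.idem_hom_form (fun a => g [a]) hom1m hom1j idem1 conv1'
      have hce : g [(⊥:L)] ≤ g [(⊤:L)] := by
        have h := mono1 (fun i => (bot_le : (fun _ : Fin 1 => (⊥:L)) i ≤ (fun _ => ⊤) i))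
        simpa [ofFn1] using h
      have hfix1 : ∀ a : L, g [⊥] ≤ a → a ≤ g [⊤] → g [a] = a := by
        intro a h1 h2
        rw [form1 a, inf_eq_right.2 h2, sup_eq_right.2 h1]
      have diagfix : ∀ a : L, g [⊥] ≤ a → a ≤ g [⊤] → g [a, a] = a := by
        intro a h1 h2
        have hga := hfix1 a h1 h2
        have h := hRI [a] (by simp) 2 (by norm_num)
        rw [hga] at h
        simpa [List.replicate] using h
      have hbnd1 : ∀ a : L, g [⊥] ≤ g [a] ∧ g [a] ≤ g [⊤] := by
        intro a; rw [form1 a]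
        exact ⟨le_sup_left, sup_le hce inf_le_left⟩
      have hbnd : ∀ y : List L, y ≠ [] → g [⊥] ≤ g y ∧ g y ≤ g [⊤] := by
        intro y hy
        have h := h1fix y hy
        have hb := hbnd1 (g y)
        rwa [h] at hb
      -- binary translations
      have upd20 : ∀ (u v y : L), Function.update ![u, v] 0 y = ![y, v] := by
        intro u v y; funext i; fin_cases i <;> simp [Function.update]
      have upd21 : ∀ (u v y : L), Function.update ![u, v] 1 y = ![u, y] := by
        intro u v y; funext i; fin_cases i <;> simp [Function.update]
      have ofFnP : ∀ a b : L, List.ofFn ![a, b] = [a, b] := fun a b => by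
        simp [List.ofFn_succ]
      have hom2Lm : ∀ b y y' : L, g [y ⊓ y', b] = g [y, b] ⊓ g [y', b] := by
        intro b y y'
        simpa [upd20, ofFnP] using (hom2 ![⊥, b] 0 y y').1
      have hom2Lj : ∀ b y y' : L, g [y ⊔ y', b] = g [y, b] ⊔ g [y', b] := by
        intro b y y'
        simpa [upd20, ofFnP] using (hom2 ![⊥, b] 0 y y').2
      have hom2Rm : ∀ a y y' : L, g [a, y ⊓ y'] = g [a, y] ⊓ g [a, y'] := by
        intro a y y'
        simpa [upd21, ofFnP] using (hom2 ![a, ⊥] 1 y y').1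
      have hom2Rj : ∀ a y y' : L, g [a, y ⊔ y'] = g [a, y] ⊔ g [a, y'] := by
        intro a y y'
        simpa [upd21, ofFnP] using (hom2 ![a, ⊥] 1 y y').2
      have conv2L : ∀ b : L, (Set.range fun x : L => g [x, b]).OrdConnected := by
        intro b
        have hfun : (fun y : L => g (List.ofFn (Function.update ![(⊥:L), b] 0 y))) =
            fun x : L => g [x, b] := by
          funext y; rw [upd20, ofFnP]
        have h := conv2v ![⊥, b] 0
        rwa [hfun] at h
      have conv2R : ∀ a : L, (Set.range fun y : L => g [a, y]).OrdConnected := by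
        intro a
        have hfun : (fun y : L => g (List.ofFn (Function.update ![a, (⊥:L)] 1 y))) =
            fun y : L => g [a, y] := by
          funext y; rw [upd21, ofFnP]
        have h := conv2v ![a, ⊥] 1
        rwa [hfun] at h
      have formL : ∀ b : L, g [⊥] ≤ b → b ≤ g [⊤] →
          ∀ x : L, g [x, b] = g [⊥, b] ⊔ (g [⊤, b] ⊓ x) := by
        intro b h1 h2
        refine S17.idem_hom_form (fun x => g [x, b])
          (fun u v => hom2Lm b u v) (fun u v => hom2Lj b u v) ?_ (conv2L b)
        intro x
        show g [g [x, b], b] = g [x, b]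
        rw [a3L, ← a3R, diagfix b h1 h2]
      have formR : ∀ a : L, g [⊥] ≤ a → a ≤ g [⊤] →
          ∀ y : L, g [a, y] = g [a, ⊥] ⊔ (g [a, ⊤] ⊓ y) := by
        intro a h1 h2
        refine S17.idem_hom_form (fun y => g [a, y])
          (fun u v => hom2Rm a u v) (fun u v => hom2Rj a u v) ?_ (conv2R a)
        intro y
        show g [a, g [a, y]] = g [a, y]
        rw [a3R, ← a3L, diagfix a h1 h2]
      -- the closed form of g₂
      have G2form : ∀ x y : L, g [x, y] =
          (g [⊥] ⊔ (g [⊥, ⊤] ⊓ y)) ⊔ ((g [⊤, ⊥] ⊔ (g [⊤] ⊓ y)) ⊓ x) := by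
        intro x y
        have hby := hbnd1 y
        have hβ₂ := hbnd [⊥, ⊤] (by simp)
        have hβ₁ := hbnd [⊤, ⊥] (by simp)
        have step1 : g [x, y] = g [x, g [y]] := (cgr x y).symm
        rw [step1, formL (g [y]) hby.1 hby.2 x]
        have hL : g [⊥, g [y]] = g [⊥] ⊔ (g [⊥, ⊤] ⊓ y) := by
          have e1 : g [⊥, g [y]] = g [g [⊥], g [y]] := (cgl ⊥ (g [y])).symm
          rw [e1, formR (g [⊥]) (hbnd1 ⊥).1 (hbnd1 ⊥).2 (g [y])]
          have e2 : g [g [⊥], ⊥] = g [⊥] := by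
            rw [← cgr (g [⊥]) ⊥, diagfix (g [⊥]) (hbnd1 ⊥).1 (hbnd1 ⊥).2]
          have e3 : g [g [⊥], ⊤] = g [⊥, ⊤] := cgl ⊥ ⊤
          rw [e2, e3, form1 y, inf_sup_left]
          apply le_antisymm
          · refine sup_le le_sup_left (sup_le (le_trans inf_le_right le_sup_left) ?_)
            exact le_trans (inf_le_inf_left _ inf_le_right) le_sup_right
          · refine sup_le le_sup_left (le_trans ?_ (le_trans le_sup_right le_sup_right))
            exact le_inf inf_le_left (le_inf (le_trans inf_le_left hβ₂.2) inf_le_right)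
        have hR : g [⊤, g [y]] = g [⊤, ⊥] ⊔ (g [⊤] ⊓ y) := by
          have e1 : g [⊤, g [y]] = g [g [⊤], g [y]] := (cgl ⊤ (g [y])).symm
          rw [e1, formR (g [⊤]) (hbnd1 ⊤).1 (hbnd1 ⊤).2 (g [y])]
          have e2 : g [g [⊤], ⊥] = g [⊤, ⊥] := cgl ⊤ ⊥
          have e3 : g [g [⊤], ⊤] = g [⊤] := by
            rw [← cgr (g [⊤]) ⊤, diagfix (g [⊤]) (hbnd1 ⊤).1 (hbnd1 ⊤).2]
          rw [e2, e3, form1 y, inf_sup_left, inf_eq_right.2 hce, ← inf_assoc, inf_idem]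
          apply le_antisymm
          · exact sup_le le_sup_left (sup_le (le_trans hβ₁.1 le_sup_left) le_sup_right)
          · exact sup_le le_sup_left (le_trans le_sup_right le_sup_right)
        rw [hL, hR]
      -- build polynomiality at every arity by induction
      intro n hn
      induction n, hn using Nat.le_induction with
      | base =>
        have hfun : (fun x : Fin 1 → L => g (List.ofFn x)) =
            fun x : Fin 1 → L => g [⊥] ⊔ (g [⊤] ⊓ x 0) := by
          funext x; rw [ofFn1, form1]
        rw [hfun]
        exact S17.poly_sup (S17.poly_const _)
          (S17.poly_inf (S17.poly_const _) (S17.poly_proj 0))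
      | succ n hn ih =>
        have hsplit : ∀ x : Fin (n + 1) → L, g (List.ofFn x) =
            g [g (List.ofFn fun i : Fin n => x i.castSucc), x (Fin.last n)] := by
          intro x
          have hne : (List.ofFn fun i : Fin n => x i.castSucc) ≠ [] := by
            simp; omega
          have h := hcol [] [x (Fin.last n)]
            (List.ofFn fun i : Fin n => x i.castSucc) hne
          simp only [List.nil_append, List.singleton_append] at h
          rw [List.ofFn_succ', List.concat_eq_append, ← h]
        have hfun : (fun x : Fin (n + 1) → L => g (List.ofFn x)) =
            fun x : Fin (n + 1) → L =>
              (g [⊥] ⊔ (g [⊥, ⊤] ⊓ x (Fin.last n))) ⊔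
                ((g [⊤, ⊥] ⊔ (g [⊤] ⊓ x (Fin.last n))) ⊓
                  g (List.ofFn fun i : Fin n => x i.castSucc)) := by
          funext x; rw [hsplit x, G2form]
        rw [hfun]
        have hu : IsPolynomialFn
            (fun x : Fin (n + 1) → L => g (List.ofFn fun i : Fin n => x i.castSucc)) :=
          S17.poly_comp ih (fun i x => x i.castSucc)
            (fun i => S17.poly_proj i.castSucc)
        exact S17.poly_sup
          (S17.poly_sup (S17.poly_const _)
            (S17.poly_inf (S17.poly_const _) (S17.poly_proj (Fin.last n))))
          (S17.poly_inf
            (S17.poly_sup (S17.poly_const _)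
              (S17.poly_inf (S17.poly_const _) (S17.poly_proj (Fin.last n))))
            hu)
end

section
/- Let L be a bounded chain (a totally ordered bounded lattice) and let g : L* → L be an associative function. The following are equivalent: (i) g is a range-idempotent polynomial function; (ii) g is a polynomial function satisfying g_2(0,0) = g_1(0) and g_2(1,1) = g_1(1); (iii) g is range-idempotent and, for every n ≥ 1, g_n is nondecreasing in each variable and the set {g_n(x y z) : y ∈ L} is convex in L for every position k and all fixed x ∈ L^{k−1}, z ∈ L^{n−k}. -/
variable {X : Type*}

variable {L : Type*} [DistribLattice L] [BoundedOrder L]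

/-!
By associativity, `g (x₁ … xₙ) = g₂ (x₁, g (x₂ … xₙ))`, so `g` is polynomial once `g₁` and `g₂`
are (polynomials compose), and range-idempotency amounts to `g₂ (c, c) = g₁ c`; this gives
(i) ⇒ (ii). On the diagonal, or in a single coordinate, a lattice polynomial has the form
`y ↦ A ⊔ (B ⊓ y)`. Such a map is monotone with range the interval `[A, A ⊔ B]`, giving (i) ⇒ (iii),
and is determined by its values at `0` and `1`, giving (ii) ⇒ (i). Conversely, on a chain a
monotone idempotent map `h` with convex range is `y ↦ h 0 ⊔ (h 1 ⊓ y)`. Under range-idempotency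
`y ↦ g₂ (y, z)` and `z ↦ g₂ (y, z)` are idempotent, as `g (g (y, z), z) = g (y, z, z) = g (y, z)`,
so (iii) makes `g₁` and `g₂` polynomial.
-/

theorem range_sup_inf_eq_Icc {α : Type*} [DistribLattice α] (A B : α) :
    Set.range (fun y => A ⊔ (B ⊓ y)) = Set.Icc A (A ⊔ B) := by
  ext c
  constructor
  · rintro ⟨y, rfl⟩
    exact ⟨le_sup_left, sup_le_sup_left inf_le_left A⟩
  · rintro ⟨hAc, hcAB⟩
    exact ⟨c, show A ⊔ (B ⊓ c) = c by rw [sup_inf_left, sup_eq_right.2 hAc, inf_eq_right.2 hcAB]⟩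

theorem eq_of_sup_inf_of_bot_top {f h : L → L} {A B A' B' : L} (hf : ∀ u, f u = A ⊔ (B ⊓ u))
    (hh : ∀ u, h u = A' ⊔ (B' ⊓ u)) (hbot : f ⊥ = h ⊥) (htop : f ⊤ = h ⊤) : f = h := by
  simp only [hf, hh, inf_bot_eq, sup_bot_eq, inf_top_eq] at hbot htop
  funext u
  rw [hf, hh, sup_inf_left, sup_inf_left, htop, hbot]

namespace IsPolynomialFn

variable {n : ℕ}

theorem of_eq_sup {ι : Type*} (s : Finset ι) (c : ι → L) (M : ι → Finset (Fin n))
    {f : (Fin n → L) → L} (hf : ∀ x, f x = s.sup fun a => c a ⊓ (M a).inf x) :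
    IsPolynomialFn f := by
  classical
  refine ⟨fun J => s.sup fun a => if M a = J then c a else ⊥, fun x => ?_⟩
  rw [hf]
  apply le_antisymm
  · refine Finset.sup_le fun a ha => Finset.le_sup_of_le (Finset.mem_univ (M a)) ?_
    exact inf_le_inf_right _ (Finset.le_sup_of_le ha (by simp))
  · refine Finset.sup_le fun J _ => ?_
    rw [Finset.sup_inf_distrib_right]
    refine Finset.sup_le fun a ha => ?_
    split_ifs with h
    · exact Finset.le_sup_of_le ha (by rw [h])
    · simp

theorem const (c : L) : IsPolynomialFn fun _ : Fin n → L => c :=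
  of_eq_sup {()} (fun _ => c) (fun _ => ∅) fun _ => by simp

theorem apply (j : Fin n) : IsPolynomialFn fun x : Fin n → L => x j :=
  of_eq_sup {()} (fun _ => ⊤) (fun _ => {j}) fun _ => by simp

theorem sup {f h : (Fin n → L) → L} (hf : IsPolynomialFn f) (hh : IsPolynomialFn h) :
    IsPolynomialFn fun x => f x ⊔ h x := by
  obtain ⟨β, hβ⟩ := hf
  obtain ⟨γ, hγ⟩ := hh
  refine ⟨β ⊔ γ, fun x => ?_⟩
  dsimp only
  rw [hβ, hγ, ← Finset.sup_sup]
  exact Finset.sup_congr rfl fun I _ => (inf_sup_right _ _ _).symm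

theorem inf {f h : (Fin n → L) → L} (hf : IsPolynomialFn f) (hh : IsPolynomialFn h) :
    IsPolynomialFn fun x => f x ⊓ h x := by
  classical
  obtain ⟨β, hβ⟩ := hf
  obtain ⟨γ, hγ⟩ := hh
  refine of_eq_sup (Finset.univ ×ˢ Finset.univ) (fun p => β p.1 ⊓ γ p.2)
    (fun p => p.1 ∪ p.2) fun x => ?_
  rw [hβ, hγ, Finset.sup_product_left, Finset.sup_inf_distrib_right]
  refine Finset.sup_congr rfl fun I _ => ?_
  rw [Finset.sup_inf_distrib_left]
  refine Finset.sup_congr rfl fun K _ => ?_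
  rw [Finset.inf_union]
  ac_rfl

theorem comp_reindex {m : ℕ} {p : (Fin m → L) → L} (hp : IsPolynomialFn p) (e : Fin m → Fin n) :
    IsPolynomialFn fun x : Fin n → L => p (x ∘ e) := by
  classical
  obtain ⟨β, hβ⟩ := hp
  exact of_eq_sup Finset.univ β (fun I => I.image e) fun x => by simp only [hβ, Finset.inf_image]

theorem monotone_s18 {f : (Fin n → L) → L} (hf : IsPolynomialFn f) : Monotone f := by
  obtain ⟨α, hα⟩ := hf
  intro x y hxy
  simp only [hα]
  gcongr with I _ i _
  exact hxy i

theorem exists_update_eq {f : (Fin n → L) → L} (hf : IsPolynomialFn f) (w : Fin n → L)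
    (k : Fin n) : ∃ A B : L, ∀ y, f (Function.update w k y) = A ⊔ (B ⊓ y) := by
  classical
  obtain ⟨α, hα⟩ := hf
  refine ⟨({I | k ∉ I} : Finset _).sup fun I => α I ⊓ I.inf w,
    ({I | k ∈ I} : Finset _).sup fun I => α I ⊓ (I.erase k).inf w, fun y => ?_⟩
  have hterm : ∀ I : Finset (Fin n), α I ⊓ I.inf (Function.update w k y) =
      if k ∈ I then α I ⊓ (I.erase k).inf w ⊓ y else α I ⊓ I.inf w := by
    intro I
    have hw : ∀ s : Finset (Fin n), k ∉ s → s.inf (Function.update w k y) = s.inf w :=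
      fun s hs => Finset.inf_congr rfl fun i hi =>
        Function.update_of_ne (ne_of_mem_of_not_mem hi hs) _ _
    split_ifs with hk
    · rw [← Finset.insert_erase hk, Finset.inf_insert, Function.update_self,
        hw _ (Finset.notMem_erase k I), Finset.erase_insert_eq_erase, Finset.erase_idem,
        inf_comm y, inf_assoc]
    · rw [hw I hk]
  rw [hα, Finset.sup_congr rfl fun I _ => hterm I, Finset.sup_ite, sup_comm,
    Finset.sup_inf_distrib_right]

theorem ordConnected_range_update {f : (Fin n → L) → L} (hf : IsPolynomialFn f)
    (w : Fin n → L) (k : Fin n) : (Set.range fun y => f (Function.update w k y)).OrdConnected := by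
  obtain ⟨A, B, hAB⟩ := hf.exists_update_eq w k
  simp only [hAB, range_sup_inf_eq_Icc]
  exact Set.ordConnected_Icc

theorem exists_const_eq {f : (Fin n → L) → L} (hf : IsPolynomialFn f) :
    ∃ A B : L, ∀ u, f (fun _ => u) = A ⊔ (B ⊓ u) := by
  obtain ⟨A, B, hAB⟩ := (hf.comp_reindex fun _ => (0 : Fin 1)).exists_update_eq (fun _ => ⊥) 0
  refine ⟨A, B, fun u => ?_⟩
  rw [← hAB]
  rfl

theorem finset_sup {ι : Type*} (s : Finset ι) {P : ι → (Fin n → L) → L}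
    (hP : ∀ i ∈ s, IsPolynomialFn (P i)) : IsPolynomialFn fun x => s.sup fun i => P i x := by
  have h := Finset.sup_induction (p := IsPolynomialFn) (const ⊥) (fun _ h₁ _ h₂ => h₁.sup h₂) hP
  rwa [funext (Finset.sup_apply s P)] at h

theorem finset_inf {ι : Type*} (s : Finset ι) {P : ι → (Fin n → L) → L}
    (hP : ∀ i ∈ s, IsPolynomialFn (P i)) : IsPolynomialFn fun x => s.inf fun i => P i x := by
  have h := Finset.inf_induction (p := IsPolynomialFn) (const ⊤) (fun _ h₁ _ h₂ => h₁.inf h₂) hP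
  rwa [funext (Finset.inf_apply s P)] at h

theorem comp {m : ℕ} {p : (Fin m → L) → L} (hp : IsPolynomialFn p)
    {P : Fin m → (Fin n → L) → L} (hP : ∀ i, IsPolynomialFn (P i)) :
    IsPolynomialFn fun x => p fun i => P i x := by
  obtain ⟨α, hα⟩ := hp
  simp only [hα]
  exact finset_sup _ fun I _ => (const _).inf (finset_inf I fun i _ => hP i)

end IsPolynomialFn

theorem IsPolyStar.exists_replicate_eq {g : List L → L} (hg : IsPolyStar g) {n : ℕ} (hn : 1 ≤ n) :
    ∃ A B : L, ∀ u, g (List.replicate n u) = A ⊔ (B ⊓ u) := by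
  simpa only [List.ofFn_const] using (hg n hn).exists_const_eq

namespace AssocStar

variable {g : List X → X}

theorem apply_append_cons_apply (hg : AssocStar g) (x z : List X) {y : List X} (hy : y ≠ []) :
    g (x ++ g y :: z) = g (x ++ y ++ z) := by
  obtain ⟨a, y, rfl⟩ := List.exists_cons_of_ne_nil hy
  simpa [strOf] using hg x (a :: y) z (x ++ a :: y ++ z) [] [] (by simp)

theorem apply_cons_apply (hg : AssocStar g) (c : X) {y : List X} (hy : y ≠ []) :
    g [c, g y] = g (c :: y) := by
  simpa using hg.apply_append_cons_apply [c] [] hy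

theorem apply_apply_cons (hg : AssocStar g) {y : List X} (hy : y ≠ []) (c : X) :
    g [g y, c] = g (y ++ [c]) := by
  simpa using hg.apply_append_cons_apply [] [c] hy

theorem apply_singleton_apply (hg : AssocStar g) {y : List X} (hy : y ≠ []) : g [g y] = g y := by
  simpa using hg.apply_append_cons_apply [] [] hy

theorem apply_append_cons_cons (hg : AssocStar g) (hdup : ∀ c, g [c, c] = g [c])
    (x z : List X) (c : X) : g (x ++ c :: c :: z) = g (x ++ c :: z) := by
  have := hg.apply_append_cons_apply x z (y := [c, c]) (by simp)
  rw [hdup, hg.apply_append_cons_apply x z (by simp)] at this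
  simpa using this.symm

theorem rangeIdem_iff (hg : AssocStar g) : RangeIdem g ↔ ∀ c, g [c, c] = g [c] := by
  constructor
  · intro hri c
    have := hri [c] (by simp) 2 one_le_two
    rwa [show List.replicate 2 (g [c]) = [g [c], g [c]] from rfl,
      hg.apply_cons_apply _ (by simp), hg.apply_apply_cons (by simp)] at this
  · intro hdup x hx n hn
    induction n, hn using Nat.le_induction with
    | base => exact hg.apply_singleton_apply hx
    | succ n hn ih =>
      rw [List.replicate_succ', ← hg.apply_apply_cons (by simp; omega), ih, hdup,
        hg.apply_singleton_apply hx]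

end AssocStar

namespace AssocStar

variable {g : List L → L}

theorem isPolyStar (hg : AssocStar g) (h₁ : IsPolynomialFn fun x : Fin 1 → L => g (List.ofFn x))
    (h₂ : IsPolynomialFn fun x : Fin 2 → L => g (List.ofFn x)) : IsPolyStar g := by
  intro n hn
  induction n, hn using Nat.le_induction with
  | base => exact h₁
  | succ n hn ih =>
    have hcomp := h₂.comp (P := ![fun x => x 0, fun x => g (List.ofFn (x ∘ Fin.succ))])
      (Fin.forall_fin_two.2 ⟨IsPolynomialFn.apply 0, ih.comp_reindex Fin.succ⟩)
    convert hcomp using 2 with x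
    rw [List.ofFn_succ, ← hg.apply_cons_apply _ (by simp; omega)]
    simp [Function.comp_def]

theorem rangeIdem_of_isPolyStar (hg : AssocStar g) (hps : IsPolyStar g)
    (hbot : g [⊥, ⊥] = g [⊥]) (htop : g [⊤, ⊤] = g [⊤]) : RangeIdem g := by
  obtain ⟨A₁, B₁, h₁⟩ := hps.exists_replicate_eq le_rfl
  obtain ⟨A₂, B₂, h₂⟩ := hps.exists_replicate_eq one_le_two
  exact hg.rangeIdem_iff.2 <| congrFun <|
    eq_of_sup_inf_of_bot_top (f := fun u => g [u, u]) (h := fun u => g [u]) h₂ h₁ hbot htop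

end AssocStar

section Chain

variable {C : Type*} [LinearOrder C] [BoundedOrder C]

theorem eq_sup_inf_of_monotone_of_idem {h : C → C} (hmono : Monotone h)
    (hconv : (Set.range h).OrdConnected) (hidem : ∀ y, h (h y) = h y) (u : C) :
    h u = h ⊥ ⊔ (h ⊤ ⊓ u) := by
  rcases le_total u (h ⊥) with hu | hu
  · have : h u = h ⊥ := le_antisymm (hidem ⊥ ▸ hmono hu) (hmono bot_le)
    rw [this, inf_eq_right.2 (hu.trans (hmono le_top)), sup_eq_left.2 hu]
  rcases le_total (h ⊤) u with hu' | hu'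
  · have : h u = h ⊤ := le_antisymm (hmono le_top) (hidem ⊤ ▸ hmono hu')
    rw [this, inf_eq_left.2 hu', sup_eq_right.2 (hmono bot_le)]
  · obtain ⟨v, rfl⟩ := hconv.out ⟨⊥, rfl⟩ ⟨⊤, rfl⟩ ⟨hu, hu'⟩
    rw [hidem, inf_eq_right.2 hu', sup_eq_right.2 hu]

variable {g : List C → C}

theorem AssocStar.isPolynomialFn_one (hg : AssocStar g)
    (hmono : Monotone fun x : Fin 1 → C => g (List.ofFn x))
    (hconv : ∀ (w : Fin 1 → C) (k : Fin 1),
      (Set.range fun y : C => g (List.ofFn (Function.update w k y))).OrdConnected) :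
    IsPolynomialFn fun x : Fin 1 → C => g (List.ofFn x) := by
  have hclamp := eq_sup_inf_of_monotone_of_idem (h := fun u => g [u])
    (fun u v huv => by simpa using hmono (a := fun _ => u) (b := fun _ => v) fun _ => huv)
    (by simpa [Function.update_apply] using hconv (fun _ => ⊥) 0)
    fun _ => hg.apply_singleton_apply (List.cons_ne_nil _ _)
  convert (IsPolynomialFn.const (g [⊥])).sup ((IsPolynomialFn.const (g [⊤])).inf
    (IsPolynomialFn.apply 0)) using 2 with x
  simpa using hclamp (x 0)

theorem AssocStar.isPolynomialFn_two (hg : AssocStar g) (hdup : ∀ c, g [c, c] = g [c])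
    (hmono : Monotone fun x : Fin 2 → C => g (List.ofFn x))
    (hconv : ∀ (w : Fin 2 → C) (k : Fin 2),
      (Set.range fun y : C => g (List.ofFn (Function.update w k y))).OrdConnected) :
    IsPolynomialFn fun x : Fin 2 → C => g (List.ofFn x) := by
  have hmono₂ {y y' z z' : C} (hy : y ≤ y') (hz : z ≤ z') : g [y, z] ≤ g [y', z'] := by
    simpa using hmono (a := ![y, z]) (b := ![y', z']) (Fin.forall_fin_two.2 ⟨hy, hz⟩)
  have hleft (y z : C) : g [y, z] = g [⊥, z] ⊔ (g [⊤, z] ⊓ y) :=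
    eq_sup_inf_of_monotone_of_idem (h := fun y => g [y, z]) (fun _ _ hy => hmono₂ hy le_rfl)
      (by simpa [Function.update_apply] using hconv ![⊥, z] 0)
      (fun y => by
        simpa [hg.apply_apply_cons] using hg.apply_append_cons_cons hdup [y] [] z) y
  have hright (y z : C) : g [y, z] = g [y, ⊥] ⊔ (g [y, ⊤] ⊓ z) :=
    eq_sup_inf_of_monotone_of_idem (h := fun z => g [y, z]) (fun _ _ hz => hmono₂ le_rfl hz)
      (by simpa [Function.update_apply] using hconv ![y, ⊥] 1)
      (fun z => by
        simpa [hg.apply_cons_apply] using hg.apply_append_cons_cons hdup [] [z] y) z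
  open IsPolynomialFn in
  convert ((const _).sup ((const _).inf (apply 1))).sup
    (((const _).sup ((const _).inf (apply 1))).inf (apply 0)) using 2 with x
  rw [List.ofFn_succ, List.ofFn_succ, List.ofFn_zero, hleft, hright ⊥, hright ⊤]
  rfl

end Chain

/-- for a bounded chain `L` and an associative `g : L* → L`, the following
are equivalent: (i) `g` is a range-idempotent polynomial function; (ii) `g` is a
polynomial function with `g₂(0,0) = g₁(0)` and `g₂(1,1) = g₁(1)`; (iii) `g` is
range-idempotent and each `gₙ` is nondecreasing and convex-ranged in each variable. -/
theorem stmt18 {C : Type*} [LinearOrder C] [BoundedOrder C]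
    (g : List C → C) (hg : AssocStar g) :
    ((RangeIdem g ∧ IsPolyStar g) ↔
        (IsPolyStar g ∧ g [⊥, ⊥] = g [⊥] ∧ g [⊤, ⊤] = g [⊤])) ∧
    ((RangeIdem g ∧ IsPolyStar g) ↔
        (RangeIdem g ∧ ∀ n : ℕ, 1 ≤ n →
          (Monotone fun x : Fin n → C => g (List.ofFn x)) ∧
          (∀ (w : Fin n → C) (k : Fin n),
            (Set.range fun y : C => g (List.ofFn (Function.update w k y))).OrdConnected))) := by
  refine ⟨⟨?_, ?_⟩, ⟨?_, ?_⟩⟩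
  · rintro ⟨hri, hps⟩
    exact ⟨hps, hg.rangeIdem_iff.1 hri ⊥, hg.rangeIdem_iff.1 hri ⊤⟩
  · rintro ⟨hps, hbot, htop⟩
    exact ⟨hg.rangeIdem_of_isPolyStar hps hbot htop, hps⟩
  · rintro ⟨hri, hps⟩
    exact ⟨hri, fun n hn => ⟨(hps n hn).monotone_s18, (hps n hn).ordConnected_range_update⟩⟩
  · rintro ⟨hri, hmc⟩
    obtain ⟨hmono₁, hconv₁⟩ := hmc 1 le_rfl
    obtain ⟨hmono₂, hconv₂⟩ := hmc 2 one_le_two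
    exact ⟨hri, hg.isPolyStar (hg.isPolynomialFn_one hmono₁ hconv₁)
      (hg.isPolynomialFn_two (hg.rangeIdem_iff.1 hri) hmono₂ hconv₂)⟩
end
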